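/- arXiv:2603.29446 — 4 statements merged into one kernel-verified Lean document; each statement's English description precedes it below -/
import Mathlib

section
/- For every real γ > -1/2 there exists a constant C_γ > 0 such that for all odd N ≥ 1 and all 0 ≤ j ≤ N-1, the discrete Sobolev norm of the indicator function of I_j = [j/N,(j+1)/N) satisfies C_γ⁻¹ N^{γ-1/2} ≤ ‖1_{I_j}‖_{H_N^γ} ≤ C_γ N^{γ-1/2}. -/
/-- Eigenvalues of the discrete Laplacian: `λ_{m,N} = 2 N² (1 - cos(2π m / N))`. -/
noncomputable def lamd (N m : ℕ) : ℝ := 2 * (N : ℝ)^2 * (1 - Real.cos (2 * Real.pi * m / N))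

/-- `L²([0,1])` inner product of two step functions constant on the intervals `I_j`. -/
noncomputable def ip (N : ℕ) (f g : Fin N → ℝ) : ℝ := (1 / (N : ℝ)) * ∑ j, f j * g j

/-- Discrete trigonometric eigenfunction `φ_{m,N}` (value on the cell `I_j`). -/
noncomputable def phiN (N m : ℕ) : Fin N → ℝ :=
  fun j => if m = 0 then 1 else Real.sqrt 2 * Real.cos (2 * Real.pi * m * (j : ℕ) / N)

/-- Discrete trigonometric eigenfunction `ψ_{m,N}` (value on the cell `I_j`). -/
noncomputable def psiN (N m : ℕ) : Fin N → ℝ :=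
  fun j => Real.sqrt 2 * Real.sin (2 * Real.pi * m * (j : ℕ) / N)

/-- Square of the discrete Sobolev norm `‖f‖²_{H_N^γ}`. -/
noncomputable def sobNormSq (N : ℕ) (γ : ℝ) (f : Fin N → ℝ) : ℝ :=
  ∑ m ∈ Finset.range ((N - 1) / 2 + 1),
    (1 + lamd N m) ^ γ * ((ip N f (phiN N m))^2 + (ip N f (psiN N m))^2)

/-- Discrete Sobolev norm `‖f‖_{H_N^γ}`. -/
noncomputable def sobNorm (N : ℕ) (γ : ℝ) (f : Fin N → ℝ) : ℝ := Real.sqrt (sobNormSq N γ f)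

/-- The element of `H_N` representing the indicator function of the cell `I_j`. -/
def indic (N : ℕ) (j : Fin N) : Fin N → ℝ := fun l => if l = j then 1 else 0

open Real Finset

lemma ip_indic (N : ℕ) (j : Fin N) (g : Fin N → ℝ) :
    ip N (indic N j) g = g j / N := by
  simp [ip, indic, ite_mul, Finset.sum_ite_eq']
  ring

lemma sobNormSq_indic (N : ℕ) (γ : ℝ) (j : Fin N) :
    sobNormSq N γ (indic N j) =
      (1 + 2 * ∑ i ∈ Finset.range ((N - 1) / 2), (1 + lamd N (i+1)) ^ γ) / (N:ℝ)^2 := by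
  have h1 : sobNormSq N γ (indic N j)
      = ∑ m ∈ Finset.range ((N - 1) / 2 + 1),
        (1 + lamd N m) ^ γ * ((phiN N m j)^2 + (psiN N m j)^2) / (N:ℝ)^2 := by
    unfold sobNormSq
    refine Finset.sum_congr rfl fun m _ => ?_
    rw [ip_indic, ip_indic]
    ring
  rw [h1, Finset.sum_range_succ']
  have h0 : (1 + lamd N 0) ^ γ * ((phiN N 0 j)^2 + (psiN N 0 j)^2) / (N:ℝ)^2 = 1 / (N:ℝ)^2 := by
    simp [lamd, phiN, psiN]
  have h2 : ∀ i, (1 + lamd N (i+1)) ^ γ * ((phiN N (i+1) j)^2 + (psiN N (i+1) j)^2) / (N:ℝ)^2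
      = (1 + lamd N (i+1)) ^ γ * 2 / (N:ℝ)^2 := by
    intro i
    have : (phiN N (i+1) j)^2 + (psiN N (i+1) j)^2 = 2 := by
      simp only [phiN, psiN, Nat.succ_ne_zero, if_false]
      have hs2 : (Real.sqrt 2)^2 = 2 := Real.sq_sqrt (by norm_num)
      have := Real.sin_sq_add_cos_sq (2 * Real.pi * (↑(i+1)) * (j : ℕ) / N)
      nlinarith [this]
    rw [this]
  rw [h0, Finset.sum_congr rfl (fun i _ => h2 i)]
  rw [← Finset.sum_div, ← Finset.sum_mul]
  ring

lemma lamd_bounds {N m : ℕ} (hN : 1 ≤ N) (hm : 1 ≤ m) (hmN : 2 * m ≤ N) :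
    (m:ℝ)^2 ≤ 1 + lamd N m ∧ 1 + lamd N m ≤ 41 * (m:ℝ)^2 := by
  have hNpos : (0:ℝ) < N := by exact_mod_cast hN
  have hmpos : (0:ℝ) < m := by exact_mod_cast hm
  have hm1 : (1:ℝ) ≤ (m:ℝ) := by exact_mod_cast hm
  set θ : ℝ := 2 * Real.pi * m / N with hθ
  have hθpos : 0 < θ := by positivity
  have hθle : θ ≤ Real.pi := by
    rw [hθ, div_le_iff₀ hNpos]
    have : (2:ℝ) * m ≤ N := by exact_mod_cast hmN
    nlinarith [Real.pi_pos]
  have hhalf : 1 - Real.cos θ = 2 * Real.sin (θ/2) ^ 2 := by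
    have := Real.sin_sq_eq_half_sub (θ/2)
    rw [show 2 * (θ/2) = θ by ring] at this
    linarith
  have hlam : lamd N m = 4 * (N:ℝ)^2 * Real.sin (θ/2) ^ 2 := by
    rw [lamd, hhalf]; ring
  have hsin_ub : Real.sin (θ/2) ≤ θ/2 := Real.sin_le (by positivity)
  have hsin_lb : θ / Real.pi ≤ Real.sin (θ/2) := by
    have := Real.mul_le_sin (x := θ/2) (by positivity) (by linarith)
    calc θ / Real.pi = 2 / Real.pi * (θ/2) := by ring
    _ ≤ Real.sin (θ/2) := this
  have hsin_nonneg : 0 ≤ Real.sin (θ/2) := le_trans (by positivity) hsin_lb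
  have hub : lamd N m ≤ 4 * Real.pi^2 * (m:ℝ)^2 := by
    rw [hlam]
    have h1 : Real.sin (θ/2)^2 ≤ (θ/2)^2 := pow_le_pow_left₀ hsin_nonneg hsin_ub 2
    have h2 : 4 * (N:ℝ)^2 * (θ/2)^2 = 4 * Real.pi^2 * (m:ℝ)^2 := by
      rw [hθ]; field_simp
    nlinarith [sq_nonneg ((N:ℝ))]
  have hlb : 16 * (m:ℝ)^2 ≤ lamd N m := by
    rw [hlam]
    have h1 : (θ/Real.pi)^2 ≤ Real.sin (θ/2)^2 := pow_le_pow_left₀ (by positivity) hsin_lb 2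
    have h2 : 4 * (N:ℝ)^2 * (θ/Real.pi)^2 = 16 * (m:ℝ)^2 := by
      rw [hθ]; field_simp; ring
    nlinarith [sq_nonneg ((N:ℝ))]
  constructor
  · nlinarith
  · have hpi : Real.pi < 3.15 := Real.pi_lt_d2
    have hpisq : Real.pi^2 < 9.93 := by
      nlinarith [mul_lt_mul_of_pos_left hpi Real.pi_pos, Real.pi_pos]
    have hm2 : (1:ℝ) ≤ (m:ℝ)^2 := by nlinarith
    nlinarith

lemma rpow_compare (γ : ℝ) {X : ℝ} {m : ℕ} (hm : 1 ≤ m)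
    (h1 : (m:ℝ)^2 ≤ X) (h2 : X ≤ 41 * (m:ℝ)^2) :
    (41:ℝ)^(-|γ|) * (m:ℝ)^(2*γ) ≤ X^γ ∧ X^γ ≤ (41:ℝ)^(|γ|) * (m:ℝ)^(2*γ) := by
  have hmpos : (0:ℝ) < m := by exact_mod_cast hm
  have hm2 : (0:ℝ) < (m:ℝ)^2 := by positivity
  have hX : 0 < X := lt_of_lt_of_le hm2 h1
  have hpow : ((m:ℝ)^2)^γ = (m:ℝ)^(2*γ) := by
    rw [← Real.rpow_two, ← Real.rpow_mul (le_of_lt hmpos)]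
  have hpow41 : ((41:ℝ) * (m:ℝ)^2)^γ = (41:ℝ)^γ * (m:ℝ)^(2*γ) := by
    rw [Real.mul_rpow (by norm_num) (le_of_lt hm2), hpow]
  have hmr : (0:ℝ) < (m:ℝ)^(2*γ) := Real.rpow_pos_of_pos hmpos _
  rcases le_or_gt 0 γ with hγ | hγ
  · rw [abs_of_nonneg hγ]
    constructor
    · calc (41:ℝ)^(-γ) * (m:ℝ)^(2*γ) ≤ 1 * (m:ℝ)^(2*γ) := by
            gcongr
            exact Real.rpow_le_one_of_one_le_of_nonpos (by norm_num) (by linarith)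
        _ = ((m:ℝ)^2)^γ := by rw [one_mul, hpow]
        _ ≤ X^γ := Real.rpow_le_rpow (le_of_lt hm2) h1 hγ
    · calc X^γ ≤ ((41:ℝ) * (m:ℝ)^2)^γ := Real.rpow_le_rpow (le_of_lt hX) h2 hγ
        _ = (41:ℝ)^γ * (m:ℝ)^(2*γ) := hpow41
  · rw [abs_of_neg hγ, neg_neg]
    constructor
    · calc (41:ℝ)^γ * (m:ℝ)^(2*γ) = ((41:ℝ) * (m:ℝ)^2)^γ := hpow41.symm
        _ ≤ X^γ := Real.rpow_le_rpow_of_nonpos hX h2 (le_of_lt hγ)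
    · calc X^γ ≤ ((m:ℝ)^2)^γ := Real.rpow_le_rpow_of_nonpos hm2 h1 (le_of_lt hγ)
        _ = 1 * (m:ℝ)^(2*γ) := by rw [one_mul, hpow]
        _ ≤ (41:ℝ)^(-γ) * (m:ℝ)^(2*γ) := by
            gcongr
            exact Real.one_le_rpow (by norm_num) (by linarith)

lemma sum_rpow_bounds {s : ℝ} (hs : -1 < s) {M : ℕ} (hM : 1 ≤ M) :
    min 1 (s+1)⁻¹ * (M:ℝ)^(s+1) ≤ ∑ i ∈ Finset.range M, ((i:ℝ)+1)^s ∧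
    ∑ i ∈ Finset.range M, ((i:ℝ)+1)^s ≤ max 1 (s+1)⁻¹ * (M:ℝ)^(s+1) := by
  set p : ℝ := s + 1 with hp
  have hppos : 0 < p := by simp [hp]; linarith
  have hMpos : (0:ℝ) < M := by exact_mod_cast hM
  have htel : ∑ i ∈ Finset.range M, (((i:ℝ)+1)^p - (i:ℝ)^p) = (M:ℝ)^p := by
    have := Finset.sum_range_sub (fun i => ((i:ℕ):ℝ)^p) M
    simp only [Nat.cast_add, Nat.cast_one] at this
    rw [this, Nat.cast_zero, Real.zero_rpow (ne_of_gt hppos), sub_zero]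
  -- pointwise bernoulli bounds
  have hbern : ∀ i : ℕ, (0 ≤ s → ((i:ℝ)+1)^p - (i:ℝ)^p ≤ p * ((i:ℝ)+1)^s) ∧
      (s ≤ 0 → p * ((i:ℝ)+1)^s ≤ ((i:ℝ)+1)^p - (i:ℝ)^p) := by
    intro i
    set b : ℝ := (i:ℝ) + 1 with hb
    have hb1 : (1:ℝ) ≤ b := by simp [hb]
    have hb0 : (0:ℝ) < b := by linarith
    have hbp : (0:ℝ) < b^p := Real.rpow_pos_of_pos hb0 _
    have hz : (-1:ℝ) ≤ -(1/b) := by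
      rw [neg_le_neg_iff]
      exact div_le_one_of_le₀ hb1 (le_of_lt hb0)
    have h1b : (1:ℝ) + -(1/b) = (i:ℝ)/b := by field_simp; rw [hb]; ring
    have hkey : b^p / b = b^s := by
      rw [← Real.rpow_sub_one (ne_of_gt hb0)]
      norm_num [hp]
    have hdiv : ((i:ℝ)/b)^p = (i:ℝ)^p / b^p :=
      Real.div_rpow (Nat.cast_nonneg i) (le_of_lt hb0) p
    constructor
    · intro hs0
      have hp1 : (1:ℝ) ≤ p := by simp [hp]; linarith
      have := one_add_mul_self_le_rpow_one_add hz hp1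
      rw [h1b, hdiv] at this
      have h2 : (1 + p * -(1/b)) * b^p ≤ (i:ℝ)^p := by
        rw [← le_div_iff₀ hbp]; exact this
      have h3 : (1 + p * -(1/b)) * b^p = b^p - p * (b^p / b) := by ring
      rw [h3, hkey] at h2
      linarith
    · intro hs0
      have hp1 : p ≤ 1 := by simp [hp]; linarith
      have := rpow_one_add_le_one_add_mul_self hz (le_of_lt hppos) hp1
      rw [h1b, hdiv] at this
      have h2 : (i:ℝ)^p ≤ (1 + p * -(1/b)) * b^p := by
        rw [← div_le_iff₀ hbp]; exact this
      have h3 : (1 + p * -(1/b)) * b^p = b^p - p * (b^p / b) := by ring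
      rw [h3, hkey] at h2
      linarith
  rcases le_or_gt 0 s with hs0 | hs0
  · constructor
    · -- lower: p * Σ ≥ M^p
      have hsum : (M:ℝ)^p ≤ p * ∑ i ∈ Finset.range M, ((i:ℝ)+1)^s := by
        rw [Finset.mul_sum, ← htel]
        exact Finset.sum_le_sum fun i _ => (hbern i).1 hs0
      have : p⁻¹ * (M:ℝ)^p ≤ ∑ i ∈ Finset.range M, ((i:ℝ)+1)^s := by
        rw [inv_mul_le_iff₀ hppos, mul_comm] at *
        · exact hsum
      calc min 1 p⁻¹ * (M:ℝ)^p ≤ p⁻¹ * (M:ℝ)^p :=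
              mul_le_mul_of_nonneg_right (min_le_right 1 p⁻¹)
                (Real.rpow_nonneg (le_of_lt hMpos) _)
        _ ≤ _ := this
    · -- upper: each term ≤ M^s
      have hsum : ∑ i ∈ Finset.range M, ((i:ℝ)+1)^s ≤ M * (M:ℝ)^s := by
        calc ∑ i ∈ Finset.range M, ((i:ℝ)+1)^s ≤ ∑ _i ∈ Finset.range M, (M:ℝ)^s := by
              refine Finset.sum_le_sum fun i hi => ?_
              refine Real.rpow_le_rpow (by positivity) ?_ hs0
              have : i + 1 ≤ M := Finset.mem_range.mp hi
              exact_mod_cast this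
          _ = M * (M:ℝ)^s := by rw [Finset.sum_const, Finset.card_range, nsmul_eq_mul]
      have hMp : (M:ℝ) * (M:ℝ)^s = (M:ℝ)^p := by
        rw [hp, Real.rpow_add hMpos, Real.rpow_one, mul_comm]
      calc ∑ i ∈ Finset.range M, ((i:ℝ)+1)^s ≤ (M:ℝ)^p := by rw [← hMp]; exact hsum
        _ ≤ max 1 p⁻¹ * (M:ℝ)^p := by
            nlinarith [Real.rpow_pos_of_pos hMpos p, le_max_left (1:ℝ) p⁻¹]
  · constructor
    · -- lower: each term ≥ M^s
      have hsum : (M:ℝ) * (M:ℝ)^s ≤ ∑ i ∈ Finset.range M, ((i:ℝ)+1)^s := by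
        calc (M:ℝ) * (M:ℝ)^s = ∑ _i ∈ Finset.range M, (M:ℝ)^s := by
              rw [Finset.sum_const, Finset.card_range, nsmul_eq_mul]
          _ ≤ ∑ i ∈ Finset.range M, ((i:ℝ)+1)^s := by
              refine Finset.sum_le_sum fun i hi => ?_
              refine Real.rpow_le_rpow_of_nonpos (by positivity) ?_ (le_of_lt hs0)
              have : i + 1 ≤ M := Finset.mem_range.mp hi
              exact_mod_cast this
      have hMp : (M:ℝ) * (M:ℝ)^s = (M:ℝ)^p := by
        rw [hp, Real.rpow_add hMpos, Real.rpow_one, mul_comm]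
      calc min 1 p⁻¹ * (M:ℝ)^p ≤ 1 * (M:ℝ)^p :=
              mul_le_mul_of_nonneg_right (min_le_left 1 p⁻¹)
                (Real.rpow_nonneg (le_of_lt hMpos) _)
        _ = (M:ℝ)^p := one_mul _
        _ ≤ _ := by rw [← hMp]; exact hsum
    · -- upper: p * Σ ≤ M^p
      have hsum : p * ∑ i ∈ Finset.range M, ((i:ℝ)+1)^s ≤ (M:ℝ)^p := by
        rw [Finset.mul_sum, ← htel]
        exact Finset.sum_le_sum fun i _ => (hbern i).2 (le_of_lt hs0)
      have h1 : ∑ i ∈ Finset.range M, ((i:ℝ)+1)^s ≤ p⁻¹ * (M:ℝ)^p := by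
        rw [le_inv_mul_iff₀ hppos]
        exact hsum
      calc ∑ i ∈ Finset.range M, ((i:ℝ)+1)^s ≤ p⁻¹ * (M:ℝ)^p := h1
        _ ≤ max 1 p⁻¹ * (M:ℝ)^p :=
              mul_le_mul_of_nonneg_right (le_max_right 1 p⁻¹)
                (Real.rpow_nonneg (le_of_lt hMpos) _)

set_option maxHeartbeats 1000000 in
/-- For `γ > -1/2`, the discrete Sobolev norm of `1_{I_j}` is comparable to `N^{γ-1/2}`,
uniformly in (odd) `N` and `j`. -/
theorem stmt_1 (γ : ℝ) (hγ : -(1/2 : ℝ) < γ) :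
    ∃ C : ℝ, 0 < C ∧ ∀ N : ℕ, Odd N → 1 ≤ N → ∀ j : Fin N,
      C⁻¹ * (N : ℝ) ^ (γ - 1/2) ≤ sobNorm N γ (indic N j) ∧
      sobNorm N γ (indic N j) ≤ C * (N : ℝ) ^ (γ - 1/2) := by
  have hK1 : (1:ℝ) ≤ (41:ℝ)^(|γ|) := Real.one_le_rpow (by norm_num) (abs_nonneg γ)
  set K : ℝ := (41:ℝ)^(|γ|) with hK
  have hKpos : 0 < K := lt_of_lt_of_le one_pos hK1
  have hppos : (0:ℝ) < 2*γ + 1 := by linarith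
  set c : ℝ := min 1 (2*γ+1)⁻¹ with hc
  set Cs : ℝ := max 1 (2*γ+1)⁻¹ with hCs
  have hcpos : 0 < c := lt_min one_pos (inv_pos.mpr hppos)
  have hCspos : 0 < Cs := lt_of_lt_of_le one_pos (le_max_left _ _)
  have h3p : (0:ℝ) < (3:ℝ)^(2*γ+1) := Real.rpow_pos_of_pos (by norm_num) _
  set a : ℝ := min 1 (2 * c / (K * (3:ℝ)^(2*γ+1))) with ha
  have hapos : 0 < a := lt_min one_pos (by positivity)
  set b : ℝ := 1 + 2 * K * Cs with hb
  have hbpos : 0 < b := by positivity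
  refine ⟨Real.sqrt b + (Real.sqrt a)⁻¹, by positivity, ?_⟩
  intro N hodd hN j
  obtain ⟨M, hMN⟩ := hodd
  have hM2 : (N - 1)/2 = M := by omega
  have hNpos : (0:ℝ) < N := by exact_mod_cast hN
  have hN1 : (1:ℝ) ≤ N := by exact_mod_cast hN
  set T := ∑ i ∈ Finset.range M, (1 + lamd N (i+1))^γ with hT
  have hsob : sobNormSq N γ (indic N j) = (1 + 2*T)/(N:ℝ)^2 := by
    rw [sobNormSq_indic, hM2]
  set S := ∑ i ∈ Finset.range M, ((i:ℝ)+1)^(2*γ) with hS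
  have hSnn : 0 ≤ S := Finset.sum_nonneg fun i _ => Real.rpow_nonneg (by positivity) _
  have hterm : ∀ i ∈ Finset.range M,
      K⁻¹ * ((i:ℝ)+1)^(2*γ) ≤ (1 + lamd N (i+1))^γ ∧
      (1 + lamd N (i+1))^γ ≤ K * ((i:ℝ)+1)^(2*γ) := by
    intro i hi
    have hiM : i + 1 ≤ M := Finset.mem_range.mp hi
    have h2m : 2 * (i+1) ≤ N := by omega
    obtain ⟨hl, hu⟩ := lamd_bounds hN (Nat.le_add_left 1 i) h2m
    obtain ⟨h1, h2⟩ := rpow_compare γ (Nat.le_add_left 1 i) hl hu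
    have hKinv : (41:ℝ)^(-|γ|) = K⁻¹ := by
      rw [Real.rpow_neg (by norm_num), hK]
    rw [hKinv] at h1
    push_cast at h1 h2
    exact ⟨h1, h2⟩
  have hTub : T ≤ K * S := by
    rw [hT, hS, Finset.mul_sum]
    exact Finset.sum_le_sum fun i hi => (hterm i hi).2
  have hTlb : K⁻¹ * S ≤ T := by
    rw [hT, hS, Finset.mul_sum]
    exact Finset.sum_le_sum fun i hi => (hterm i hi).1
  have hTnn : 0 ≤ T := le_trans (by positivity) hTlb
  have hNp1 : (1:ℝ) ≤ (N:ℝ)^(2*γ+1) := Real.one_le_rpow hN1 (le_of_lt hppos)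
  have hNpnn : (0:ℝ) < (N:ℝ)^(2*γ+1) := Real.rpow_pos_of_pos hNpos _
  -- upper bound on 1 + 2T
  have hub : 1 + 2*T ≤ b * (N:ℝ)^(2*γ+1) := by
    have hSub : S ≤ Cs * (N:ℝ)^(2*γ+1) := by
      rcases Nat.eq_zero_or_pos M with h0 | hM1
      · rw [hS, h0]
        simp only [Finset.range_zero, Finset.sum_empty]
        positivity
      · have hb2 := (sum_rpow_bounds (by linarith : (-1:ℝ) < 2*γ) hM1).2
        have hMN' : (M:ℝ) ≤ (N:ℝ) := by
          have : M ≤ N := by omega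
          exact_mod_cast this
        have hMp : (M:ℝ)^(2*γ+1) ≤ (N:ℝ)^(2*γ+1) :=
          Real.rpow_le_rpow (Nat.cast_nonneg M) hMN' (le_of_lt hppos)
        calc S ≤ Cs * (M:ℝ)^(2*γ+1) := hb2
          _ ≤ Cs * (N:ℝ)^(2*γ+1) := by nlinarith
    have : T ≤ K * (Cs * (N:ℝ)^(2*γ+1)) := le_trans hTub (by nlinarith)
    rw [hb]; nlinarith
  -- lower bound on 1 + 2T
  have hlb : a * (N:ℝ)^(2*γ+1) ≤ 1 + 2*T := by
    rcases Nat.eq_zero_or_pos M with h0 | hM1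
    · have hN1' : N = 1 := by omega
      have hT0 : T = 0 := by rw [hT, h0]; simp
      have hNp : (N:ℝ)^(2*γ+1) = 1 := by rw [hN1']; simp
      rw [hNp, hT0]
      have : a ≤ 1 := min_le_left _ _
      linarith
    · have hb1 := (sum_rpow_bounds (by linarith : (-1:ℝ) < 2*γ) hM1).1
      have hN3M : (N:ℝ) ≤ 3 * M := by
        have : N ≤ 3 * M := by omega
        exact_mod_cast this
      have hdivM : (N:ℝ)/3 ≤ (M:ℝ) := by linarith
      have hMp : (N:ℝ)^(2*γ+1) / (3:ℝ)^(2*γ+1) ≤ (M:ℝ)^(2*γ+1) := by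
        rw [← Real.div_rpow (le_of_lt hNpos) (by norm_num)]
        exact Real.rpow_le_rpow (by positivity) hdivM (le_of_lt hppos)
      have hSlb : c * ((N:ℝ)^(2*γ+1) / (3:ℝ)^(2*γ+1)) ≤ S :=
        le_trans (by nlinarith) hb1
      have hTlb2 : K⁻¹ * (c * ((N:ℝ)^(2*γ+1) / (3:ℝ)^(2*γ+1))) ≤ T := by
        refine le_trans ?_ hTlb
        have hKinvpos : 0 < K⁻¹ := inv_pos.mpr hKpos
        nlinarith
      have ha2 : a ≤ 2 * c / (K * (3:ℝ)^(2*γ+1)) := min_le_right _ _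
      have key : a * (N:ℝ)^(2*γ+1) ≤ 2 * (K⁻¹ * (c * ((N:ℝ)^(2*γ+1) / (3:ℝ)^(2*γ+1)))) := by
        have heq : 2 * (K⁻¹ * (c * ((N:ℝ)^(2*γ+1) / (3:ℝ)^(2*γ+1))))
            = (2 * c / (K * (3:ℝ)^(2*γ+1))) * (N:ℝ)^(2*γ+1) := by
          field_simp
        rw [heq]
        exact mul_le_mul_of_nonneg_right ha2 (le_of_lt hNpnn)
      linarith
  -- convert to sobNormSq bounds
  have hNdiv : (N:ℝ)^(2*γ+1) / (N:ℝ)^2 = (N:ℝ)^(2*γ-1) := by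
    rw [← Real.rpow_two, ← Real.rpow_sub hNpos]
    congr 1
    ring
  have hsq_lb : a * (N:ℝ)^(2*γ-1) ≤ sobNormSq N γ (indic N j) := by
    rw [hsob, ← hNdiv, mul_div_assoc']
    gcongr
  have hsq_ub : sobNormSq N γ (indic N j) ≤ b * (N:ℝ)^(2*γ-1) := by
    rw [hsob, ← hNdiv, mul_div_assoc']
    gcongr
  have hsqrt_eq : ∀ x : ℝ, 0 ≤ x →
      Real.sqrt (x * (N:ℝ)^(2*γ-1)) = Real.sqrt x * (N:ℝ)^(γ - 1/2) := by
    intro x hx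
    rw [Real.sqrt_mul hx, Real.sqrt_eq_rpow ((N:ℝ)^(2*γ-1)),
      ← Real.rpow_mul (le_of_lt hNpos), show (2*γ-1) * (1/(2:ℝ)) = γ - 1/2 by ring]
  have hCa : (Real.sqrt b + (Real.sqrt a)⁻¹)⁻¹ ≤ Real.sqrt a := by
    have h1 : (Real.sqrt a)⁻¹ ≤ Real.sqrt b + (Real.sqrt a)⁻¹ :=
      le_add_of_nonneg_left (Real.sqrt_nonneg b)
    have h2 : 0 < (Real.sqrt a)⁻¹ := by positivity
    calc (Real.sqrt b + (Real.sqrt a)⁻¹)⁻¹ ≤ ((Real.sqrt a)⁻¹)⁻¹ :=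
          inv_anti₀ h2 h1
      _ = Real.sqrt a := inv_inv _
  constructor
  · calc (Real.sqrt b + (Real.sqrt a)⁻¹)⁻¹ * (N:ℝ)^(γ - 1/2)
        ≤ Real.sqrt a * (N:ℝ)^(γ - 1/2) :=
          mul_le_mul_of_nonneg_right hCa (Real.rpow_nonneg (le_of_lt hNpos) _)
      _ = Real.sqrt (a * (N:ℝ)^(2*γ-1)) := (hsqrt_eq a (le_of_lt hapos)).symm
      _ ≤ sobNorm N γ (indic N j) := Real.sqrt_le_sqrt hsq_lb
  · calc sobNorm N γ (indic N j) ≤ Real.sqrt (b * (N:ℝ)^(2*γ-1)) :=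
          Real.sqrt_le_sqrt hsq_ub
      _ = Real.sqrt b * (N:ℝ)^(γ - 1/2) := hsqrt_eq b (le_of_lt hbpos)
      _ ≤ (Real.sqrt b + (Real.sqrt a)⁻¹) * (N:ℝ)^(γ - 1/2) := by
          have : Real.sqrt b ≤ Real.sqrt b + (Real.sqrt a)⁻¹ :=
            le_add_of_nonneg_right (by positivity)
          exact mul_le_mul_of_nonneg_right this (Real.rpow_nonneg (le_of_lt hNpos) _)
end

section
/- Let α ≤ β be real numbers and T > 0. There exists a constant c > 0 independent of N such that for every N ≥ 1, every f ∈ H_N, and every t ∈ (0,T], the discrete heat semigroup T_N(t) = e^{t Δ_N} satisfies ‖T_N(t) f‖_{H_N^β} ≤ c t^{-(β-α)/2} ‖f‖_{H_N^α}. -/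
/-- The discrete heat semigroup `T_N(t) = e^{tΔ_N}`, acting diagonally in the
discrete trigonometric eigenbasis: the `m`-th mode is multiplied by `e^{-λ_{m,N} t}`. -/
noncomputable def heatN (N : ℕ) (t : ℝ) (f : Fin N → ℝ) : Fin N → ℝ :=
  fun j => ∑ m ∈ Finset.range ((N - 1) / 2 + 1),
    Real.exp (-(lamd N m) * t) *
      (ip N f (phiN N m) * phiN N m j + ip N f (psiN N m) * psiN N m j)

section Aux
open Finset Real

lemma expSum (N : ℕ) (hN : 1 ≤ N) (k : ℤ) :
    ∑ j : Fin N, Complex.exp (((2 * Real.pi * k * j / N : ℝ) : ℂ) * Complex.I) =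
      if (N : ℤ) ∣ k then (N : ℂ) else 0 := by
  have hN0 : (N : ℂ) ≠ 0 := Nat.cast_ne_zero.mpr (by omega)
  set ζ : ℂ := Complex.exp (((2 * Real.pi * k / N : ℝ) : ℂ) * Complex.I) with hζ
  have hterm : ∀ j : Fin N,
      Complex.exp (((2 * Real.pi * k * j / N : ℝ) : ℂ) * Complex.I) = ζ ^ (j : ℕ) := by
    intro j
    rw [hζ, ← Complex.exp_nat_mul]
    congr 1
    push_cast
    ring
  rw [Finset.sum_congr rfl (fun j _ => hterm j), Fin.sum_univ_eq_sum_range]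
  by_cases hdvd : (N : ℤ) ∣ k
  · obtain ⟨m, rfl⟩ := hdvd
    have hζ1 : ζ = 1 := by
      rw [hζ]
      have : (((2 * Real.pi * (N * m : ℤ) / N : ℝ) : ℂ) * Complex.I)
          = (m : ℤ) * (2 * Real.pi * Complex.I) := by
        push_cast
        field_simp
      rw [this, Complex.exp_int_mul_two_pi_mul_I]
    simp [hζ1, Dvd.intro m rfl]
  · have hζN : ζ ^ N = 1 := by
      rw [hζ, ← Complex.exp_nat_mul]
      have : (N : ℂ) * (((2 * Real.pi * k / N : ℝ) : ℂ) * Complex.I)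
          = (k : ℤ) * (2 * Real.pi * Complex.I) := by
        push_cast
        field_simp
      rw [this, Complex.exp_int_mul_two_pi_mul_I]
    have hζ1 : ζ ≠ 1 := by
      intro h
      rw [hζ, Complex.exp_eq_one_iff] at h
      obtain ⟨n, hn⟩ := h
      apply hdvd
      have hπI : (2 : ℂ) * Real.pi * Complex.I ≠ 0 := by
        simp [Real.pi_ne_zero, Complex.I_ne_zero]
      have : ((k : ℂ) / N) * (2 * Real.pi * Complex.I) = (n : ℂ) * (2 * Real.pi * Complex.I) := by
        rw [← hn]
        push_cast
        ring
      have hkn : (k : ℂ) / N = n := mul_right_cancel₀ hπI this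
      have : (k : ℂ) = n * N := by field_simp at hkn; linear_combination hkn
      exact ⟨n, by exact_mod_cast this.trans (mul_comm _ _)⟩
    rw [geom_sum_eq hζ1, hζN]
    simp [hdvd]

lemma cosSum (N : ℕ) (hN : 1 ≤ N) (k : ℤ) :
    ∑ j : Fin N, Real.cos (2 * Real.pi * k * j / N) =
      if (N : ℤ) ∣ k then (N : ℝ) else 0 := by
  have h := expSum N hN k
  have hre : (∑ j : Fin N, Complex.exp (((2 * Real.pi * k * j / N : ℝ) : ℂ) * Complex.I)).re
      = ∑ j : Fin N, Real.cos (2 * Real.pi * k * j / N) := by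
    rw [Complex.re_sum]
    exact Finset.sum_congr rfl fun j _ => by
      rw [Complex.exp_ofReal_mul_I_re]
  rw [← hre, h]
  split <;> simp

lemma sinSum (N : ℕ) (hN : 1 ≤ N) (k : ℤ) :
    ∑ j : Fin N, Real.sin (2 * Real.pi * k * j / N) = 0 := by
  have h := expSum N hN k
  have him : (∑ j : Fin N, Complex.exp (((2 * Real.pi * k * j / N : ℝ) : ℂ) * Complex.I)).im
      = ∑ j : Fin N, Real.sin (2 * Real.pi * k * j / N) := by
    rw [Complex.im_sum]
    exact Finset.sum_congr rfl fun j _ => by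
      rw [Complex.exp_ofReal_mul_I_im]
  rw [← him, h]
  split <;> simp

lemma two_cos_mul_cos (a b : ℝ) :
    (Real.sqrt 2 * Real.cos a) * (Real.sqrt 2 * Real.cos b)
      = Real.cos (a - b) + Real.cos (a + b) := by
  have h2 : Real.sqrt 2 * Real.sqrt 2 = 2 := Real.mul_self_sqrt (by norm_num)
  rw [Real.cos_sub, Real.cos_add]
  linear_combination (Real.cos a * Real.cos b) * h2

lemma two_sin_mul_sin (a b : ℝ) :
    (Real.sqrt 2 * Real.sin a) * (Real.sqrt 2 * Real.sin b)
      = Real.cos (a - b) - Real.cos (a + b) := by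
  have h2 : Real.sqrt 2 * Real.sqrt 2 = 2 := Real.mul_self_sqrt (by norm_num)
  rw [Real.cos_sub, Real.cos_add]
  linear_combination (Real.sin a * Real.sin b) * h2

lemma two_sin_mul_cos (a b : ℝ) :
    (Real.sqrt 2 * Real.sin a) * (Real.sqrt 2 * Real.cos b)
      = Real.sin (a + b) + Real.sin (a - b) := by
  have h2 : Real.sqrt 2 * Real.sqrt 2 = 2 := Real.mul_self_sqrt (by norm_num)
  rw [Real.sin_add, Real.sin_sub]
  linear_combination (Real.sin a * Real.cos b) * h2

lemma not_dvd_of_lt (N : ℕ) (c : ℤ) (h0 : c ≠ 0) (h : c.natAbs < N) : ¬ (N : ℤ) ∣ c :=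
  fun hd => h0 (Int.eq_zero_of_dvd_of_natAbs_lt_natAbs hd (by simpa using h))

lemma ippp (N m m' : ℕ) (hN : 1 ≤ N) (hm : m ≤ (N-1)/2) (hm' : m' ≤ (N-1)/2) :
    ip N (phiN N m) (phiN N m') = if m = m' then 1 else 0 := by
  have hN0 : (N : ℝ) ≠ 0 := Nat.cast_ne_zero.mpr (by omega)
  unfold ip
  by_cases hm0 : m = 0 <;> by_cases hm'0 : m' = 0
  · subst hm0; subst hm'0
    simp [phiN, hN0]
  · have key : ∀ j : Fin N, phiN N m j * phiN N m' j
        = Real.sqrt 2 * Real.cos (2 * Real.pi * ((m' : ℤ)) * j / N) := by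
      intro j
      simp only [phiN, if_pos hm0, if_neg hm'0, one_mul]
      push_cast; ring_nf
    rw [Finset.sum_congr rfl (fun j _ => key j), ← Finset.mul_sum, cosSum N hN]
    have : ¬ (N : ℤ) ∣ (m' : ℤ) := not_dvd_of_lt N _ (by omega) (by omega)
    rw [if_neg this, if_neg (by omega : ¬ m = m')]
    simp
  · have key : ∀ j : Fin N, phiN N m j * phiN N m' j
        = Real.sqrt 2 * Real.cos (2 * Real.pi * ((m : ℤ)) * j / N) := by
      intro j
      simp only [phiN, if_neg hm0, if_pos hm'0, mul_one]
      push_cast; ring_nf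
    rw [Finset.sum_congr rfl (fun j _ => key j), ← Finset.mul_sum, cosSum N hN]
    have : ¬ (N : ℤ) ∣ (m : ℤ) := not_dvd_of_lt N _ (by omega) (by omega)
    rw [if_neg this, if_neg (by omega : ¬ m = m')]
    simp
  · have key : ∀ j : Fin N, phiN N m j * phiN N m' j
        = Real.cos (2 * Real.pi * (((m : ℤ) - m' : ℤ) : ℝ) * j / N)
          + Real.cos (2 * Real.pi * (((m : ℤ) + m' : ℤ) : ℝ) * j / N) := by
      intro j
      simp only [phiN, if_neg hm0, if_neg hm'0]
      rw [two_cos_mul_cos]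
      congr 2 <;> · push_cast; ring
    rw [Finset.sum_congr rfl (fun j _ => key j), Finset.sum_add_distrib,
      cosSum N hN, cosSum N hN]
    have hsum : ¬ (N : ℤ) ∣ ((m : ℤ) + m') := not_dvd_of_lt N _ (by omega) (by omega)
    by_cases hmm : m = m'
    · subst hmm
      simp [hsum, hN0]
    · have hdiff : ¬ (N : ℤ) ∣ ((m : ℤ) - m') := not_dvd_of_lt N _ (by omega) (by omega)
      simp [hsum, hdiff, hmm]

lemma ipps (N m m' : ℕ) (hN : 1 ≤ N) :
    ip N (psiN N m) (phiN N m') = 0 := by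
  unfold ip
  by_cases hm'0 : m' = 0
  · have key : ∀ j : Fin N, psiN N m j * phiN N m' j
        = Real.sqrt 2 * Real.sin (2 * Real.pi * ((m : ℤ)) * j / N) := by
      intro j
      simp only [psiN, phiN, if_pos hm'0, mul_one]
      push_cast; ring_nf
    rw [Finset.sum_congr rfl (fun j _ => key j), ← Finset.mul_sum, sinSum N hN]
    simp
  · have key : ∀ j : Fin N, psiN N m j * phiN N m' j
        = Real.sin (2 * Real.pi * (((m : ℤ) + m' : ℤ) : ℝ) * j / N)
          + Real.sin (2 * Real.pi * (((m : ℤ) - m' : ℤ) : ℝ) * j / N) := by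
      intro j
      simp only [psiN, phiN, if_neg hm'0]
      rw [two_sin_mul_cos]
      congr 2 <;> · push_cast; ring
    rw [Finset.sum_congr rfl (fun j _ => key j), Finset.sum_add_distrib,
      sinSum N hN, sinSum N hN]
    simp

lemma ipss (N m m' : ℕ) (hN : 1 ≤ N) (hm : m ≤ (N-1)/2) (hm' : m' ≤ (N-1)/2) :
    ip N (psiN N m) (psiN N m') = if m = m' ∧ m ≠ 0 then 1 else 0 := by
  have hN0 : (N : ℝ) ≠ 0 := Nat.cast_ne_zero.mpr (by omega)
  unfold ip
  by_cases hm0 : m = 0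
  · subst hm0
    simp [psiN]
  · by_cases hm'0 : m' = 0
    · subst hm'0
      simp [psiN, hm0]
    · have key : ∀ j : Fin N, psiN N m j * psiN N m' j
          = Real.cos (2 * Real.pi * (((m : ℤ) - m' : ℤ) : ℝ) * j / N)
            - Real.cos (2 * Real.pi * (((m : ℤ) + m' : ℤ) : ℝ) * j / N) := by
        intro j
        simp only [psiN]
        rw [two_sin_mul_sin]
        congr 2 <;> · push_cast; ring
      rw [Finset.sum_congr rfl (fun j _ => key j), Finset.sum_sub_distrib,
        cosSum N hN, cosSum N hN]
      have hsum : ¬ (N : ℤ) ∣ ((m : ℤ) + m') := not_dvd_of_lt N _ (by omega) (by omega)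
      by_cases hmm : m = m'
      · subst hmm
        simp [hsum, hN0, hm0]
      · have hdiff : ¬ (N : ℤ) ∣ ((m : ℤ) - m') := not_dvd_of_lt N _ (by omega) (by omega)
        simp [hsum, hdiff, hmm]

lemma ip_comm (N : ℕ) (f g : Fin N → ℝ) : ip N f g = ip N g f := by
  unfold ip
  simp [mul_comm]

lemma ip_sum_left {N : ℕ} (s : Finset ℕ) (F : ℕ → Fin N → ℝ) (g : Fin N → ℝ) :
    ip N (fun j => ∑ m ∈ s, F m j) g = ∑ m ∈ s, ip N (F m) g := by
  unfold ip
  simp_rw [Finset.sum_mul]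
  rw [Finset.sum_comm, Finset.mul_sum]

lemma ip_smul_add (N : ℕ) (c x y : ℝ) (u v g : Fin N → ℝ) :
    ip N (fun j => c * (x * u j + y * v j)) g = c * (x * ip N u g + y * ip N v g) := by
  unfold ip
  have h : ∀ j : Fin N, c * (x * u j + y * v j) * g j
      = c * x * (u j * g j) + c * y * (v j * g j) := fun j => by ring
  simp_rw [h, Finset.sum_add_distrib, ← Finset.mul_sum]
  ring

lemma ip_heat_phi (N : ℕ) (hN : 1 ≤ N) (t : ℝ) (f : Fin N → ℝ) (m : ℕ)
    (hm : m ≤ (N - 1) / 2) :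
    ip N (heatN N t f) (phiN N m) = Real.exp (-(lamd N m) * t) * ip N f (phiN N m) := by
  have : heatN N t f = fun j => ∑ m' ∈ Finset.range ((N - 1) / 2 + 1),
      (fun m' j => Real.exp (-(lamd N m') * t) *
        (ip N f (phiN N m') * phiN N m' j + ip N f (psiN N m') * psiN N m' j)) m' j := rfl
  rw [this, ip_sum_left]
  have hterm : ∀ m' ∈ Finset.range ((N - 1) / 2 + 1),
      ip N (fun j => Real.exp (-(lamd N m') * t) *
        (ip N f (phiN N m') * phiN N m' j + ip N f (psiN N m') * psiN N m' j)) (phiN N m)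
      = Real.exp (-(lamd N m') * t) * (ip N f (phiN N m') * (if m' = m then 1 else 0)) := by
    intro m' hm'
    rw [ip_smul_add, ippp N m' m hN (by simpa using Nat.lt_succ_iff.mp (Finset.mem_range.mp hm')) hm,
      ipps N m' m hN]
    ring
  rw [Finset.sum_congr rfl hterm, Finset.sum_eq_single m]
  · simp
  · intro m' _ hne
    simp [hne]
  · intro h
    exact absurd (Finset.mem_range.mpr (Nat.lt_succ_of_le hm)) h

lemma ip_heat_psi (N : ℕ) (hN : 1 ≤ N) (t : ℝ) (f : Fin N → ℝ) (m : ℕ)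
    (hm : m ≤ (N - 1) / 2) :
    ip N (heatN N t f) (psiN N m) = Real.exp (-(lamd N m) * t) * ip N f (psiN N m) := by
  have : heatN N t f = fun j => ∑ m' ∈ Finset.range ((N - 1) / 2 + 1),
      (fun m' j => Real.exp (-(lamd N m') * t) *
        (ip N f (phiN N m') * phiN N m' j + ip N f (psiN N m') * psiN N m' j)) m' j := rfl
  rw [this, ip_sum_left]
  have hterm : ∀ m' ∈ Finset.range ((N - 1) / 2 + 1),
      ip N (fun j => Real.exp (-(lamd N m') * t) *
        (ip N f (phiN N m') * phiN N m' j + ip N f (psiN N m') * psiN N m' j)) (psiN N m)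
      = Real.exp (-(lamd N m') * t) *
          (ip N f (psiN N m') * (if m' = m ∧ m' ≠ 0 then 1 else 0)) := by
    intro m' hm'
    rw [ip_smul_add, ip_comm N (phiN N m') (psiN N m), ipps N m m' hN,
      ipss N m' m hN (by simpa using Nat.lt_succ_iff.mp (Finset.mem_range.mp hm')) hm]
    ring
  rw [Finset.sum_congr rfl hterm, Finset.sum_eq_single m]
  · by_cases hm0 : m = 0
    · have hb : ip N f (psiN N m) = 0 := by
        subst hm0
        simp [ip, psiN]
      simp [hb]
    · simp [hm0]
  · intro m' _ hne
    simp [hne]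
  · intro h
    exact absurd (Finset.mem_range.mpr (Nat.lt_succ_of_le hm)) h

lemma smoothing_bound (δ T t lam : ℝ) (hδ : 0 ≤ δ) (hT : 0 < T) (ht : 0 < t) (htT : t ≤ T)
    (hlam : 0 ≤ lam) :
    (1 + lam) ^ δ * Real.exp (-lam * t) ^ 2
      ≤ (Nat.factorial (Nat.ceil δ) : ℝ) * Real.exp (1 + T) * t ^ (-δ) := by
  set n := Nat.ceil δ with hn
  set K := (Nat.factorial n : ℝ) * Real.exp (1 + T) with hK
  have hu : 0 ≤ lam * t := mul_nonneg hlam ht.le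
  have key : t ^ δ * ((1 + lam) ^ δ * Real.exp (-lam * t) ^ 2) ≤ K := by
    have hexp : Real.exp (-lam * t) ^ 2 ≤ Real.exp (-(lam * t)) := by
      rw [← Real.exp_nat_mul]
      apply Real.exp_le_exp.mpr
      push_cast
      nlinarith
    have h1 : t ^ δ * (1 + lam) ^ δ = (t * (1 + lam)) ^ δ :=
      (Real.mul_rpow ht.le (by linarith)).symm
    have h2 : (t * (1 + lam)) ^ δ ≤ (1 + T + lam * t) ^ δ := by
      apply Real.rpow_le_rpow (by positivity) _ hδ
      nlinarith
    have h3 : (1 + T + lam * t) ^ δ ≤ (1 + T + lam * t) ^ (n : ℝ) := by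
      apply Real.rpow_le_rpow_of_exponent_le (by linarith) (Nat.le_ceil δ)
    have h4 : (1 + T + lam * t) ^ (n : ℝ) = (1 + T + lam * t) ^ n :=
      Real.rpow_natCast _ n
    have h5 : (1 + T + lam * t) ^ n ≤ (Nat.factorial n : ℝ) * Real.exp (1 + T + lam * t) := by
      have := Real.pow_div_factorial_le_exp (x := 1 + T + lam * t) (by positivity) n
      have hfac : (0:ℝ) < (Nat.factorial n : ℝ) := by positivity
      rw [div_le_iff₀ hfac] at this
      linarith [this]
    calc t ^ δ * ((1 + lam) ^ δ * Real.exp (-lam * t) ^ 2)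
        = (t ^ δ * (1 + lam) ^ δ) * Real.exp (-lam * t) ^ 2 := by ring
      _ ≤ (1 + T + lam * t) ^ n * Real.exp (-(lam * t)) := by
          apply mul_le_mul _ hexp (by positivity) (by positivity)
          rw [h1]
          calc (t * (1 + lam)) ^ δ ≤ (1 + T + lam * t) ^ δ := h2
            _ ≤ (1 + T + lam * t) ^ (n : ℝ) := h3
            _ = _ := h4
      _ ≤ ((Nat.factorial n : ℝ) * Real.exp (1 + T + lam * t)) * Real.exp (-(lam * t)) := by
          apply mul_le_mul_of_nonneg_right h5 (Real.exp_nonneg _)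
      _ = K := by
          rw [hK, mul_assoc, ← Real.exp_add]
          congr 2
          ring
  have htδ : (0:ℝ) < t ^ δ := Real.rpow_pos_of_pos ht δ
  have : (1 + lam) ^ δ * Real.exp (-lam * t) ^ 2 ≤ K / t ^ δ := by
    rw [le_div_iff₀ htδ]
    linarith [key]
  calc (1 + lam) ^ δ * Real.exp (-lam * t) ^ 2 ≤ K / t ^ δ := this
    _ = K * t ^ (-δ) := by rw [Real.rpow_neg ht.le]; ring

lemma lamd_nonneg (N m : ℕ) : 0 ≤ lamd N m := by
  unfold lamd
  have := Real.cos_le_one (2 * Real.pi * m / N)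
  have : (0:ℝ) ≤ 1 - Real.cos (2 * Real.pi * m / N) := by linarith
  positivity


end Aux

/-- Smoothing property of the discrete heat semigroup: for `α ≤ β` and `T > 0`,
`‖T_N(t) f‖_{H_N^β} ≤ c t^{-(β-α)/2} ‖f‖_{H_N^α}` for `t ∈ (0,T]`, uniformly in `N`. -/
theorem stmt_5 (α β T : ℝ) (hαβ : α ≤ β) (hT : 0 < T) :
    ∃ c : ℝ, 0 < c ∧ ∀ N : ℕ, 1 ≤ N → ∀ f : Fin N → ℝ, ∀ t : ℝ, 0 < t → t ≤ T →
      sobNorm N β (heatN N t f) ≤ c * t ^ (-(β - α) / 2) * sobNorm N α f := by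
  set K := (Nat.factorial (Nat.ceil (β - α)) : ℝ) * Real.exp (1 + T) with hK
  have hK0 : 0 < K := by positivity
  refine ⟨Real.sqrt K, Real.sqrt_pos.mpr hK0, ?_⟩
  intro N hN f t ht htT
  have hδ : 0 ≤ β - α := by linarith
  -- expand the Sobolev norm of the heat evolution
  have hS : sobNormSq N β (heatN N t f)
      = ∑ m ∈ Finset.range ((N - 1) / 2 + 1),
          (1 + lamd N m) ^ β * Real.exp (-(lamd N m) * t) ^ 2 *
            ((ip N f (phiN N m))^2 + (ip N f (psiN N m))^2) := by
    unfold sobNormSq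
    refine Finset.sum_congr rfl fun m hm => ?_
    have hmle : m ≤ (N - 1) / 2 := Nat.lt_succ_iff.mp (Finset.mem_range.mp hm)
    rw [ip_heat_phi N hN t f m hmle, ip_heat_psi N hN t f m hmle]
    ring
  have hbound : sobNormSq N β (heatN N t f) ≤ K * t ^ (-(β - α)) * sobNormSq N α f := by
    rw [hS]
    have : K * t ^ (-(β - α)) * sobNormSq N α f
        = ∑ m ∈ Finset.range ((N - 1) / 2 + 1),
            K * t ^ (-(β - α)) * ((1 + lamd N m) ^ α *
              ((ip N f (phiN N m))^2 + (ip N f (psiN N m))^2)) := by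
      unfold sobNormSq
      rw [← Finset.mul_sum]
    rw [this]
    apply Finset.sum_le_sum
    intro m _
    have hlm := lamd_nonneg N m
    have h1lm : (0:ℝ) < 1 + lamd N m := by linarith
    have hsplit : (1 + lamd N m) ^ β = (1 + lamd N m) ^ α * (1 + lamd N m) ^ (β - α) := by
      rw [← Real.rpow_add h1lm]
      ring_nf
    have hsm := smoothing_bound (β - α) T t (lamd N m) hδ hT ht htT hlm
    have hsq : (0:ℝ) ≤ (ip N f (phiN N m))^2 + (ip N f (psiN N m))^2 := by positivity
    calc (1 + lamd N m) ^ β * Real.exp (-(lamd N m) * t) ^ 2 *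
          ((ip N f (phiN N m))^2 + (ip N f (psiN N m))^2)
        = ((1 + lamd N m) ^ (β - α) * Real.exp (-(lamd N m) * t) ^ 2) *
            ((1 + lamd N m) ^ α * ((ip N f (phiN N m))^2 + (ip N f (psiN N m))^2)) := by
          rw [hsplit]; ring
      _ ≤ (K * t ^ (-(β - α))) *
            ((1 + lamd N m) ^ α * ((ip N f (phiN N m))^2 + (ip N f (psiN N m))^2)) := by
          apply mul_le_mul_of_nonneg_right _ (by positivity)
          exact hsm
      _ = K * t ^ (-(β - α)) * ((1 + lamd N m) ^ α *
            ((ip N f (phiN N m))^2 + (ip N f (psiN N m))^2)) := by ring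
  -- pass to square roots
  unfold sobNorm
  calc Real.sqrt (sobNormSq N β (heatN N t f))
      ≤ Real.sqrt (K * t ^ (-(β - α)) * sobNormSq N α f) := Real.sqrt_le_sqrt hbound
    _ = Real.sqrt K * Real.sqrt (t ^ (-(β - α))) * Real.sqrt (sobNormSq N α f) := by
        rw [Real.sqrt_mul (by positivity), Real.sqrt_mul hK0.le]
    _ = Real.sqrt K * t ^ (-(β - α) / 2) * Real.sqrt (sobNormSq N α f) := by
        congr 2
        rw [Real.sqrt_eq_rpow, ← Real.rpow_mul ht.le]
        congr 1
        ring
end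

section
/- For every β with 1/2 < β ≤ 1 there exists a constant c > 0 independent of N such that for all u, v ∈ H_N, ‖uv‖_{H_N^β} ≤ c ‖u‖_{H_N^β} ‖v‖_{H_N^β}; that is, (H_N^β, pointwise product) is an algebra with norm constant uniform in N. -/
open Real Complex Finset

noncomputable def eZ (N : ℕ) (z : ℤ) : ℂ := Complex.exp (2 * Real.pi * Complex.I * z / N)

lemma eZ_add (N : ℕ) (a b : ℤ) : eZ N (a + b) = eZ N a * eZ N b := by
  rw [eZ, eZ, eZ, ← Complex.exp_add]
  congr 1
  push_cast
  ring

lemma eZ_cos_sin (N : ℕ) (z : ℤ) :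
    eZ N z = (Real.cos (2 * Real.pi * z / N) : ℂ) + (Real.sin (2 * Real.pi * z / N) : ℂ) * Complex.I := by
  rw [eZ]
  have h : 2 * Real.pi * Complex.I * z / N = ((2 * Real.pi * z / N : ℝ) : ℂ) * Complex.I := by
    push_cast; ring
  rw [h, Complex.exp_mul_I, Complex.ofReal_cos, Complex.ofReal_sin]

lemma eZ_mod (N : ℕ) (a b : ℤ) (h : (N : ℤ) ∣ a - b) : eZ N a = eZ N b := by
  obtain ⟨t, ht⟩ := h
  have ha : a = b + N * t := by linarith
  subst ha
  rw [eZ_add]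
  have h1 : eZ N ((N : ℤ) * t) = 1 := by
    rcases Nat.eq_zero_or_pos N with h0 | h0
    · subst h0; simp [eZ]
    · rw [eZ]
      have hN : (N : ℂ) ≠ 0 := Nat.cast_ne_zero.mpr h0.ne'
      have h2 : 2 * Real.pi * Complex.I * ((N * t : ℤ) : ℂ) / N = (t : ℂ) * (2 * Real.pi * Complex.I) := by
        push_cast
        field_simp
      rw [h2]
      exact_mod_cast Complex.exp_int_mul_two_pi_mul_I t
  rw [h1, mul_one]

lemma eZ_conj (N : ℕ) (z : ℤ) : (starRingEnd ℂ) (eZ N z) = eZ N (-z) := by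
  rw [eZ, eZ, ← Complex.exp_conj]
  congr 1
  have : ((z : ℂ)) = ((z : ℝ) : ℂ) := by push_cast; rfl
  rw [this]
  simp only [map_div₀, map_mul, Complex.conj_I, Complex.conj_ofReal, map_ofNat, map_natCast, map_intCast]
  push_cast
  ring

lemma eZ_abs (N : ℕ) (z : ℤ) : ‖eZ N z‖ = 1 := by
  rw [eZ_cos_sin, Complex.norm_def, Complex.normSq_add_mul_I, Real.cos_sq_add_sin_sq, Real.sqrt_one]

lemma eZ_pow (N : ℕ) (m : ℤ) (l : ℕ) : eZ N (m * l) = (eZ N m) ^ l := by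
  rw [eZ, eZ, ← Complex.exp_nat_mul]
  congr 1
  push_cast
  ring

lemma eZ_orth (N : ℕ) (hN : 0 < N) (m : ℤ) :
    ∑ l : Fin N, eZ N (m * l) = if (N : ℤ) ∣ m then (N : ℂ) else 0 := by
  have hsum : ∑ l : Fin N, eZ N (m * l) = ∑ l ∈ Finset.range N, (eZ N m) ^ l := by
    rw [← Fin.sum_univ_eq_sum_range (fun l => (eZ N m) ^ l) N]
    exact Finset.sum_congr rfl fun l _ => eZ_pow N m l
  rw [hsum]
  split_ifs with h
  · have h1 : eZ N m = 1 := by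
      have := eZ_mod N m 0 (by simpa using h)
      simpa [eZ] using this
    simp [h1]
  · have hne : eZ N m ≠ 1 := by
      intro he
      apply h
      rw [eZ, Complex.exp_eq_one_iff] at he
      obtain ⟨n, hn⟩ := he
      have hNC : (N : ℂ) ≠ 0 := Nat.cast_ne_zero.mpr hN.ne'
      have hpi : (2 * Real.pi * Complex.I : ℂ) ≠ 0 := by
        simp [Complex.I_ne_zero, Real.pi_ne_zero, Complex.ofReal_ne_zero]
      have key : (m : ℂ) = ((N * n : ℤ) : ℂ) := by
        have h2 : (m : ℂ) * (2 * Real.pi * Complex.I) = ((N * n : ℤ) : ℂ) * (2 * Real.pi * Complex.I) := by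
          field_simp at hn
          push_cast
          linear_combination (2 * Real.pi * Complex.I) * hn
        exact mul_right_cancel₀ hpi h2
      exact ⟨n, by exact_mod_cast key⟩
    rw [geom_sum_eq hne]
    have hpow : (eZ N m) ^ N = 1 := by
      rw [← eZ_pow]
      have := eZ_mod N (m * N) 0 ⟨m, by ring⟩
      simpa [eZ] using this
    rw [hpow]
    simp
noncomputable def lamdZ (N : ℕ) (z : ℤ) : ℝ := 2 * (N : ℝ)^2 * (1 - Real.cos (2 * Real.pi * z / N))

lemma lamdZ_nonneg (N : ℕ) (z : ℤ) : 0 ≤ lamdZ N z := by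
  have := Real.cos_le_one (2 * Real.pi * z / N)
  have h2 : (0:ℝ) ≤ 1 - Real.cos (2 * Real.pi * z / N) := by linarith
  have h3 : (0:ℝ) ≤ 2 * (N:ℝ)^2 := by positivity
  exact mul_nonneg h3 h2

lemma lamdZ_mod (N : ℕ) (a b : ℤ) (h : (N : ℤ) ∣ a - b) : lamdZ N a = lamdZ N b := by
  rcases Nat.eq_zero_or_pos N with h0 | h0
  · simp [lamdZ, h0]
  obtain ⟨t, ht⟩ := h
  have ha : a = b + N * t := by linarith
  subst ha
  rw [lamdZ, lamdZ]
  congr 2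
  have hN : (N : ℝ) ≠ 0 := Nat.cast_ne_zero.mpr h0.ne'
  have harg : 2 * Real.pi * ((b + N * t : ℤ) : ℝ) / N = 2 * Real.pi * (b:ℝ) / N + (t:ℤ) * (2 * Real.pi) := by
    push_cast
    field_simp
  rw [harg, Real.cos_add_int_mul_two_pi]

lemma lamdZ_abs (N : ℕ) (z : ℤ) :
    lamdZ N z = ((N : ℝ) * ‖1 - eZ N z‖)^2 := by
  rw [mul_pow, eZ_cos_sin, Complex.sq_norm]
  have h1 : (1 : ℂ) - ((Real.cos (2*Real.pi*z/N) : ℝ) + (Real.sin (2*Real.pi*z/N) : ℝ) * Complex.I)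
      = ((1 - Real.cos (2*Real.pi*z/N) : ℝ) : ℂ) + ((- Real.sin (2*Real.pi*z/N) : ℝ) : ℂ) * Complex.I := by
    push_cast; ring
  rw [h1, Complex.normSq_add_mul_I]
  have hpyth := Real.sin_sq_add_cos_sq (2*Real.pi*z/N)
  rw [lamdZ]
  linear_combination (-(N:ℝ)^2) * hpyth

lemma sqrt_lamdZ (N : ℕ) (z : ℤ) :
    Real.sqrt (lamdZ N z) = (N : ℝ) * ‖1 - eZ N z‖ := by
  rw [lamdZ_abs]
  exact Real.sqrt_sq (by positivity)

lemma sqrt_lamdZ_triangle (N : ℕ) (k l : ℤ) :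
    Real.sqrt (lamdZ N k) ≤ Real.sqrt (lamdZ N (k - l)) + Real.sqrt (lamdZ N l) := by
  rw [sqrt_lamdZ, sqrt_lamdZ, sqrt_lamdZ]
  have hsplit : (1 : ℂ) - eZ N k = (1 - eZ N (k - l)) * eZ N l + (1 - eZ N l) := by
    have : eZ N (k - l) * eZ N l = eZ N k := by
      rw [← eZ_add]; congr 1; ring
    linear_combination this
  calc (N : ℝ) * ‖1 - eZ N k‖
      = (N : ℝ) * ‖(1 - eZ N (k - l)) * eZ N l + (1 - eZ N l)‖ := by rw [hsplit]
    _ ≤ (N : ℝ) * (‖(1 - eZ N (k - l)) * eZ N l‖ + ‖1 - eZ N l‖) := by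
        apply mul_le_mul_of_nonneg_left (norm_add_le _ _) (Nat.cast_nonneg N)
    _ = (N : ℝ) * ‖1 - eZ N (k - l)‖ + (N : ℝ) * ‖1 - eZ N l‖ := by
        rw [norm_mul, eZ_abs]; ring

lemma rpow_subadd {x y p : ℝ} (hx : 0 ≤ x) (hy : 0 ≤ y) (hp : 0 ≤ p) (hp1 : p ≤ 1) :
    (x + y) ^ p ≤ x ^ p + y ^ p := by
  have h := NNReal.rpow_add_le_add_rpow (Real.toNNReal x) (Real.toNNReal y) hp hp1
  have h2 := NNReal.coe_le_coe.mpr h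
  push_cast [Real.coe_toNNReal x hx, Real.coe_toNNReal y hy] at h2
  exact h2
noncomputable def Wh (N : ℕ) (β : ℝ) (z : ℤ) : ℝ := (1 + lamdZ N z) ^ (β/2)

lemma one_le_Wh (N : ℕ) {β : ℝ} (hβ : 0 ≤ β) (z : ℤ) : 1 ≤ Wh N β z := by
  exact Real.one_le_rpow (by linarith [lamdZ_nonneg N z]) (by linarith)

lemma Wh_pos (N : ℕ) {β : ℝ} (hβ : 0 ≤ β) (z : ℤ) : 0 < Wh N β z :=
  lt_of_lt_of_le one_pos (one_le_Wh N hβ z)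

lemma Wh_mod (N : ℕ) (β : ℝ) (a b : ℤ) (h : (N : ℤ) ∣ a - b) : Wh N β a = Wh N β b := by
  rw [Wh, Wh, lamdZ_mod N a b h]

lemma Wh_sq (N : ℕ) (β : ℝ) (z : ℤ) : (Wh N β z)^2 = (1 + lamdZ N z) ^ β := by
  rw [Wh, ← Real.rpow_natCast ((1 + lamdZ N z) ^ (β/2)) 2,
    ← Real.rpow_mul (by linarith [lamdZ_nonneg N z])]
  norm_num

lemma sqrt_rpow_beta (β : ℝ) {x : ℝ} (hx : 0 ≤ x) : (Real.sqrt x) ^ β = x ^ (β/2) := by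
  rw [Real.sqrt_eq_rpow, ← Real.rpow_mul hx]
  ring_nf

lemma Wh_triangle (N : ℕ) {β : ℝ} (hβ0 : 0 < β) (hβ1 : β ≤ 1) (k l : ℤ) :
    Wh N β k ≤ 2 * (Wh N β (k - l) + Wh N β l) := by
  set A := lamdZ N (k - l) with hA
  set B := lamdZ N l with hB
  set C := lamdZ N k with hC
  have hA0 : 0 ≤ A := lamdZ_nonneg N (k - l)
  have hB0 : 0 ≤ B := lamdZ_nonneg N l
  have hC0 : 0 ≤ C := lamdZ_nonneg N k
  have htri : Real.sqrt C ≤ Real.sqrt A + Real.sqrt B := sqrt_lamdZ_triangle N k l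
  have h1 : Wh N β k ≤ (1 + Real.sqrt C) ^ β := by
    rw [Wh, ← hC]
    have hbase : (1 + C) ^ ((1:ℝ)/2) ≤ 1 + Real.sqrt C := by
      rw [← Real.sqrt_eq_rpow]
      have : 1 + C ≤ (1 + Real.sqrt C)^2 := by
        have := Real.sq_sqrt hC0
        nlinarith [Real.sqrt_nonneg C]
      calc Real.sqrt (1 + C) ≤ Real.sqrt ((1 + Real.sqrt C)^2) := Real.sqrt_le_sqrt this
        _ = 1 + Real.sqrt C := Real.sqrt_sq (by positivity)
    calc (1 + C) ^ (β/2) = ((1 + C) ^ ((1:ℝ)/2)) ^ β := by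
          rw [← Real.rpow_mul (by linarith)]; ring_nf
      _ ≤ (1 + Real.sqrt C) ^ β := by
          apply Real.rpow_le_rpow (Real.rpow_nonneg (by linarith) _) hbase hβ0.le
  have h2 : (1 + Real.sqrt C) ^ β ≤ 1 + (Real.sqrt C) ^ β := by
    calc (1 + Real.sqrt C) ^ β ≤ 1 ^ β + (Real.sqrt C) ^ β :=
          rpow_subadd one_pos.le (Real.sqrt_nonneg C) hβ0.le hβ1
      _ = 1 + (Real.sqrt C) ^ β := by rw [Real.one_rpow]
  have h3 : (Real.sqrt C) ^ β ≤ (Real.sqrt A) ^ β + (Real.sqrt B) ^ β := by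
    calc (Real.sqrt C) ^ β ≤ (Real.sqrt A + Real.sqrt B) ^ β :=
          Real.rpow_le_rpow (Real.sqrt_nonneg C) htri hβ0.le
      _ ≤ (Real.sqrt A) ^ β + (Real.sqrt B) ^ β :=
          rpow_subadd (Real.sqrt_nonneg A) (Real.sqrt_nonneg B) hβ0.le hβ1
  have h4 : (Real.sqrt A) ^ β ≤ Wh N β (k - l) := by
    rw [sqrt_rpow_beta β hA0, Wh, ← hA]
    exact Real.rpow_le_rpow hA0 (by linarith) (by linarith)
  have h5 : (Real.sqrt B) ^ β ≤ Wh N β l := by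
    rw [sqrt_rpow_beta β hB0, Wh, ← hB]
    exact Real.rpow_le_rpow hB0 (by linarith) (by linarith)
  have h6 : (1:ℝ) ≤ Wh N β (k - l) := one_le_Wh N hβ0.le _
  have h7 : (0:ℝ) < Wh N β l := Wh_pos N hβ0.le _
  linarith
noncomputable def fh (N : ℕ) (f : Fin N → ℝ) (z : ℤ) : ℂ :=
  (1/(N:ℂ)) * ∑ j : Fin N, (f j : ℂ) * eZ N (-(z * (j:ℕ)))

lemma fh_mod (N : ℕ) (f : Fin N → ℝ) (a b : ℤ) (h : (N : ℤ) ∣ a - b) : fh N f a = fh N f b := by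
  rw [fh, fh]
  congr 1
  apply Finset.sum_congr rfl
  intro j _
  congr 1
  apply eZ_mod
  have : -(a * (j:ℕ)) - -(b * (j:ℕ)) = -(a - b) * (j:ℕ) := by ring
  rw [this]
  exact Dvd.dvd.mul_right (dvd_neg.mpr h) _

lemma fh_conj (N : ℕ) (f : Fin N → ℝ) (z : ℤ) :
    fh N f (-z) = (starRingEnd ℂ) (fh N f z) := by
  rw [fh, fh, map_mul, map_sum]
  congr 1
  · simp
  apply Finset.sum_congr rfl
  intro j _
  rw [map_mul, Complex.conj_ofReal, eZ_conj]
  congr 2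
  ring

lemma fin_dvd_iff (N : ℕ) (j j' : Fin N) :
    (N : ℤ) ∣ ((j:ℕ) : ℤ) - ((j':ℕ) : ℤ) ↔ j = j' := by
  constructor
  · intro h
    have h1 : |((j:ℕ) : ℤ) - ((j':ℕ) : ℤ)| < N := by
      have := j.isLt; have := j'.isLt
      rw [abs_lt]; omega
    have := Int.eq_zero_of_abs_lt_dvd h h1
    have : (j:ℕ) = (j':ℕ) := by omega
    exact Fin.ext this
  · rintro rfl; simp

lemma fh_conv (N : ℕ) (hN : 0 < N) (u v : Fin N → ℝ) (k : ℤ) :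
    ∑ l : Fin N, fh N u (k - (l:ℕ)) * fh N v ((l:ℕ) : ℤ) = fh N (fun j => u j * v j) k := by
  have hNC : (N:ℂ) ≠ 0 := Nat.cast_ne_zero.mpr hN.ne'
  have step1 : ∀ l : Fin N,
      fh N u (k - (l:ℕ)) * fh N v ((l:ℕ) : ℤ)
        = (1/(N:ℂ))^2 * ∑ j : Fin N, ∑ j' : Fin N,
            (u j : ℂ) * (v j' : ℂ) * eZ N (-(k * (j:ℕ)))
              * eZ N ((((j:ℕ):ℤ) - ((j':ℕ):ℤ)) * (l:ℕ)) := by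
    intro l
    rw [fh, fh, mul_mul_mul_comm, Finset.sum_mul_sum, sq]
    congr 1
    apply Finset.sum_congr rfl
    intro j _
    apply Finset.sum_congr rfl
    intro j' _
    have he : eZ N (-((k - (l:ℕ)) * (j:ℕ))) * eZ N (-(((l:ℕ):ℤ) * (j':ℕ)))
        = eZ N (-(k * (j:ℕ))) * eZ N ((((j:ℕ):ℤ) - ((j':ℕ):ℤ)) * (l:ℕ)) := by
      rw [← eZ_add, ← eZ_add]
      congr 1
      ring
    linear_combination (u j : ℂ) * (v j' : ℂ) * he
  calc ∑ l : Fin N, fh N u (k - (l:ℕ)) * fh N v ((l:ℕ) : ℤ)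
      = ∑ l : Fin N, (1/(N:ℂ))^2 * ∑ j : Fin N, ∑ j' : Fin N,
          (u j : ℂ) * (v j' : ℂ) * eZ N (-(k * (j:ℕ)))
            * eZ N ((((j:ℕ):ℤ) - ((j':ℕ):ℤ)) * (l:ℕ)) := Finset.sum_congr rfl (fun l _ => step1 l)
    _ = (1/(N:ℂ))^2 * ∑ j : Fin N, ∑ j' : Fin N,
          (u j : ℂ) * (v j' : ℂ) * eZ N (-(k * (j:ℕ)))
            * ∑ l : Fin N, eZ N ((((j:ℕ):ℤ) - ((j':ℕ):ℤ)) * (l:ℕ)) := by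
        rw [← Finset.mul_sum]
        congr 1
        rw [Finset.sum_comm]
        apply Finset.sum_congr rfl
        intro j _
        rw [Finset.sum_comm]
        apply Finset.sum_congr rfl
        intro j' _
        rw [← Finset.mul_sum]
    _ = (1/(N:ℂ))^2 * ∑ j : Fin N, ((u j : ℂ) * (v j : ℂ) * eZ N (-(k * (j:ℕ))) * N) := by
        congr 1
        apply Finset.sum_congr rfl
        intro j _
        have horth : ∀ j' : Fin N, ∑ l : Fin N, eZ N ((((j:ℕ):ℤ) - ((j':ℕ):ℤ)) * (l:ℕ))
            = if j' = j then (N:ℂ) else 0 := by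
          intro j'
          rw [eZ_orth N hN]
          by_cases h : j = j'
          · subst h; simp
          · have h1 : ¬ ((N:ℤ) ∣ ((j:ℕ):ℤ) - ((j':ℕ):ℤ)) := by rw [fin_dvd_iff]; exact h
            have h2 : ¬ (j' = j) := fun h' => h h'.symm
            rw [if_neg h1, if_neg h2]
        calc ∑ j' : Fin N, (u j : ℂ) * (v j' : ℂ) * eZ N (-(k * (j:ℕ)))
                * ∑ l : Fin N, eZ N ((((j:ℕ):ℤ) - ((j':ℕ):ℤ)) * (l:ℕ))
            = ∑ j' : Fin N, (u j : ℂ) * (v j' : ℂ) * eZ N (-(k * (j:ℕ)))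
                * (if j' = j then (N:ℂ) else 0) := by
              apply Finset.sum_congr rfl; intro j' _; rw [horth j']
          _ = ∑ j' : Fin N, (if j' = j then (u j : ℂ) * (v j' : ℂ) * eZ N (-(k * (j:ℕ))) * N else 0) := by
              apply Finset.sum_congr rfl; intro j' _; split_ifs <;> simp
          _ = (u j : ℂ) * (v j : ℂ) * eZ N (-(k * (j:ℕ))) * N := by
              rw [Finset.sum_ite_eq' Finset.univ j
                (fun j' => (u j : ℂ) * (v j' : ℂ) * eZ N (-(k * (j:ℕ))) * N)]
              simp
    _ = fh N (fun j => u j * v j) k := by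
        rw [fh]
        rw [show ∑ j : Fin N, ((u j : ℂ) * (v j : ℂ) * eZ N (-(k * (j:ℕ))) * N)
            = (N:ℂ) * ∑ j : Fin N, ((u j * v j : ℝ) : ℂ) * eZ N (-(k * (j:ℕ))) by
          rw [Finset.mul_sum]; apply Finset.sum_congr rfl; intro j _; push_cast; ring]
        field_simp
lemma lamdZ_natCast (N m : ℕ) : lamdZ N ((m:ℕ):ℤ) = lamd N m := by
  rw [lamdZ, lamd]
  norm_num

lemma fh_eq (N : ℕ) (f : Fin N → ℝ) (m : ℕ) :
    fh N f (m:ℤ) = ((ip N f (fun j => Real.cos (2*Real.pi*m*j/N)) : ℝ) : ℂ)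
      - ((ip N f (fun j => Real.sin (2*Real.pi*m*j/N)) : ℝ) : ℂ) * Complex.I := by
  rw [fh, ip, ip]
  have hterm : ∀ j : Fin N, (f j : ℂ) * eZ N (-((m:ℤ) * (j:ℕ)))
      = ((f j * Real.cos (2*Real.pi*m*(j:ℕ)/N) : ℝ) : ℂ)
        - ((f j * Real.sin (2*Real.pi*m*(j:ℕ)/N) : ℝ) : ℂ) * Complex.I := by
    intro j
    rw [eZ_cos_sin]
    have harg : 2*Real.pi*((-((m:ℤ) * (j:ℕ)) : ℤ):ℝ)/N = -(2*Real.pi*m*(j:ℕ)/N) := by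
      push_cast; ring
    rw [harg, Real.cos_neg, Real.sin_neg]
    push_cast
    ring
  rw [Finset.sum_congr rfl (fun j _ => hterm j), Finset.sum_sub_distrib, ← Finset.sum_mul,
    ← Complex.ofReal_sum, ← Complex.ofReal_sum, Complex.ofReal_mul, Complex.ofReal_mul,
    Complex.ofReal_div, Complex.ofReal_one, Complex.ofReal_natCast]
  ring

lemma normSq_fh (N : ℕ) (f : Fin N → ℝ) (m : ℕ) :
    Complex.normSq (fh N f (m:ℤ))
      = (ip N f (fun j => Real.cos (2*Real.pi*m*j/N)))^2
        + (ip N f (fun j => Real.sin (2*Real.pi*m*j/N)))^2 := by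
  rw [fh_eq, sub_eq_add_neg, ← neg_mul, ← Complex.ofReal_neg, Complex.normSq_add_mul_I]
  ring

lemma ip_phi (N : ℕ) (f : Fin N → ℝ) (m : ℕ) (hm : m ≠ 0) :
    ip N f (phiN N m) = Real.sqrt 2 * ip N f (fun j => Real.cos (2*Real.pi*m*j/N)) := by
  rw [ip, ip]
  simp only [phiN, if_neg hm]
  rw [Finset.mul_sum, Finset.mul_sum, Finset.mul_sum]
  apply Finset.sum_congr rfl
  intro j _
  ring

lemma ip_psi (N : ℕ) (f : Fin N → ℝ) (m : ℕ) :
    ip N f (psiN N m) = Real.sqrt 2 * ip N f (fun j => Real.sin (2*Real.pi*m*j/N)) := by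
  rw [ip, ip]
  simp only [psiN]
  rw [Finset.mul_sum, Finset.mul_sum, Finset.mul_sum]
  apply Finset.sum_congr rfl
  intro j _
  ring

lemma pair_eq (N : ℕ) (f : Fin N → ℝ) (m : ℕ) (hm : m ≠ 0) :
    (ip N f (phiN N m))^2 + (ip N f (psiN N m))^2 = 2 * Complex.normSq (fh N f (m:ℤ)) := by
  rw [ip_phi N f m hm, ip_psi N f m, normSq_fh]
  have h2 : (Real.sqrt 2)^2 = 2 := Real.sq_sqrt (by norm_num)
  nlinarith [h2]

lemma zero_eq (N : ℕ) (f : Fin N → ℝ) :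
    (ip N f (phiN N 0))^2 + (ip N f (psiN N 0))^2 = Complex.normSq (fh N f (0:ℤ)) := by
  have h0 : ((0:ℕ):ℤ) = (0:ℤ) := rfl
  rw [← h0, normSq_fh]
  have hphi : ip N f (phiN N 0) = ip N f (fun j => Real.cos (2*Real.pi*(0:ℕ)*j/N)) := by
    rw [ip, ip]
    congr 1
    apply Finset.sum_congr rfl
    intro j _
    simp [phiN]
  have hpsi : ip N f (psiN N 0) = ip N f (fun j => Real.sin (2*Real.pi*(0:ℕ)*j/N)) := by
    rw [ip, ip]
    congr 1
    apply Finset.sum_congr rfl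
    intro j _
    simp [psiN]
  rw [hphi, hpsi]

lemma lamdZ_neg (N : ℕ) (z : ℤ) : lamdZ N (-z) = lamdZ N z := by
  rw [lamdZ, lamdZ]
  congr 2
  have : 2*Real.pi*((-z : ℤ):ℝ)/N = -(2*Real.pi*(z:ℝ)/N) := by push_cast; ring
  rw [this, Real.cos_neg]

lemma normSq_fh_refl (N : ℕ) (f : Fin N → ℝ) (m : ℕ) (hm : m ≤ N) :
    Complex.normSq (fh N f ((N - m : ℕ) : ℤ)) = Complex.normSq (fh N f (m:ℤ)) := by
  have h1 : fh N f ((N - m : ℕ) : ℤ) = fh N f (-(m:ℤ)) := by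
    apply fh_mod
    have : ((N - m : ℕ) : ℤ) = (N:ℤ) - (m:ℤ) := by omega
    rw [this]
    ring_nf
    exact ⟨1, by ring⟩
  rw [h1, fh_conj, Complex.normSq_conj]

lemma lamd_refl (N : ℕ) (m : ℕ) (hm : m ≤ N) : lamd N (N - m) = lamd N m := by
  rw [← lamdZ_natCast, ← lamdZ_natCast]
  have : ((N - m : ℕ) : ℤ) = (N:ℤ) - (m:ℤ) := by omega
  rw [this]
  have h2 : lamdZ N ((N:ℤ) - (m:ℤ)) = lamdZ N (-(m:ℤ)) := by
    apply lamdZ_mod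
    exact ⟨1, by ring⟩
  rw [h2, lamdZ_neg]
lemma sobNormSq_eq (N : ℕ) (hodd : Odd N) (γ : ℝ) (f : Fin N → ℝ) :
    sobNormSq N γ f = ∑ k ∈ Finset.range N, (1 + lamd N k)^γ * Complex.normSq (fh N f (k:ℤ)) := by
  obtain ⟨h, rfl⟩ : ∃ h, N = 2*h+1 := by
    obtain ⟨h, hh⟩ := hodd
    exact ⟨h, by omega⟩
  set g : ℕ → ℝ := fun k => (1 + lamd (2*h+1) k)^γ * Complex.normSq (fh (2*h+1) f (k:ℤ)) with hg
  set T : ℕ → ℝ := fun m => (1 + lamd (2*h+1) m)^γ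
    * ((ip (2*h+1) f (phiN (2*h+1) m))^2 + (ip (2*h+1) f (psiN (2*h+1) m))^2) with hT
  have hrange : (2*h+1 - 1)/2 + 1 = h + 1 := by omega
  have hL : sobNormSq (2*h+1) γ f = ∑ m ∈ Finset.range (h+1), T m := by
    rw [sobNormSq, hrange]
  have hT0 : T 0 = g 0 := by
    rw [hT, hg]
    beta_reduce
    rw [zero_eq]
    norm_num
  have hTm : ∀ m, 1 ≤ m → m ≤ 2*h → T m = g m + g (2*h+1 - m) := by
    intro m h1 h2
    rw [hT, hg]
    beta_reduce
    rw [pair_eq _ f m (by omega)]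
    rw [lamd_refl (2*h+1) m (by omega), normSq_fh_refl (2*h+1) f m (by omega)]
    ring
  rw [hL, Finset.sum_range_succ' T h]
  have hsplit : ∑ k ∈ Finset.range (2*h+1), g k
      = (∑ i ∈ Finset.range h, g (i+1) + ∑ i ∈ Finset.range h, g (h+1+i)) + g 0 := by
    rw [Finset.sum_range_succ' g (2*h)]
    congr 1
    have h2h : 2*h = h + h := by omega
    rw [h2h, Finset.sum_range_add (fun i => g (i+1)) h h]
    congr 1
    apply Finset.sum_congr rfl
    intro i _
    congr 1
    omega
  rw [hsplit]
  have hrefl : ∑ i ∈ Finset.range h, g (2*h - i) = ∑ i ∈ Finset.range h, g (h+1+i) := by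
    rw [← Finset.sum_range_reflect (fun j => g (h+1+j)) h]
    apply Finset.sum_congr rfl
    intro i hi
    congr 1
    have : i < h := Finset.mem_range.mp hi
    omega
  have hmain : ∑ i ∈ Finset.range h, T (i+1)
      = ∑ i ∈ Finset.range h, g (i+1) + ∑ i ∈ Finset.range h, g (2*h - i) := by
    rw [← Finset.sum_add_distrib]
    apply Finset.sum_congr rfl
    intro i hi
    have : i < h := Finset.mem_range.mp hi
    rw [hTm (i+1) (by omega) (by omega)]
    congr 2
    omega
  rw [hmain, hrefl, hT0]
lemma young (N : ℕ) [NeZero N] (P q : Fin N → ℝ) (hq : ∀ k, 0 ≤ q k) :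
    ∑ k : Fin N, (∑ l : Fin N, P (k - l) * q l)^2
      ≤ (∑ k : Fin N, (P k)^2) * (∑ l : Fin N, q l)^2 := by
  have hCS : ∀ k : Fin N, (∑ l, P (k-l) * q l)^2
      ≤ (∑ l, (P (k-l))^2 * q l) * (∑ l, q l) := by
    intro k
    have h1 : ∀ l : Fin N, P (k-l) * q l = (P (k-l) * Real.sqrt (q l)) * Real.sqrt (q l) := by
      intro l; rw [mul_assoc, Real.mul_self_sqrt (hq l)]
    rw [Finset.sum_congr rfl (fun l _ => h1 l)]
    have h2 := Finset.sum_mul_sq_le_sq_mul_sq Finset.univ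
      (fun l => P (k-l) * Real.sqrt (q l)) (fun l => Real.sqrt (q l))
    have h3 : ∀ l : Fin N, (P (k-l) * Real.sqrt (q l))^2 = (P (k-l))^2 * q l := by
      intro l; rw [mul_pow, Real.sq_sqrt (hq l)]
    have h4 : ∀ l : Fin N, (Real.sqrt (q l))^2 = q l := fun l => Real.sq_sqrt (hq l)
    rw [Finset.sum_congr rfl (fun l _ => h3 l), Finset.sum_congr rfl (fun l _ => h4 l)] at h2
    exact h2
  have hshift : ∀ l : Fin N, ∑ k : Fin N, (P (k-l))^2 = ∑ k : Fin N, (P k)^2 := by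
    intro l
    apply Fintype.sum_equiv (Equiv.subRight l) (fun k => (P (k-l))^2) (fun k => (P k)^2)
    intro x
    simp [Equiv.subRight]
  calc ∑ k : Fin N, (∑ l : Fin N, P (k - l) * q l)^2
      ≤ ∑ k : Fin N, (∑ l, (P (k-l))^2 * q l) * (∑ l, q l) := Finset.sum_le_sum (fun k _ => hCS k)
    _ = (∑ k : Fin N, ∑ l, (P (k-l))^2 * q l) * (∑ l, q l) := by rw [← Finset.sum_mul]
    _ = (∑ l : Fin N, (∑ k : Fin N, (P (k-l))^2) * q l) * (∑ l, q l) := by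
        rw [Finset.sum_comm]
        congr 1
        apply Finset.sum_congr rfl
        intro l _
        rw [← Finset.sum_mul]
    _ = (∑ l : Fin N, (∑ k : Fin N, (P k)^2) * q l) * (∑ l, q l) := by
        congr 1
        apply Finset.sum_congr rfl
        intro l _
        rw [hshift l]
    _ = (∑ k : Fin N, (P k)^2) * (∑ l : Fin N, q l)^2 := by
        rw [← Finset.mul_sum]
        ring

lemma key_est (N : ℕ) [NeZero N] (W a b c : Fin N → ℝ)
    (hW1 : ∀ k, 1 ≤ W k) (htri : ∀ k l, W k ≤ 2*(W (k-l) + W l))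
    (ha : ∀ k, 0 ≤ a k) (hb : ∀ k, 0 ≤ b k) (hc : ∀ k, 0 ≤ c k)
    (hconv : ∀ k, c k ≤ ∑ l, a (k-l) * b l) :
    ∑ k : Fin N, (W k * c k)^2
      ≤ 8*((∑ k : Fin N, (W k * a k)^2) * (∑ l : Fin N, b l)^2
        + (∑ l : Fin N, a l)^2 * (∑ k : Fin N, (W k * b k)^2)) := by
  set X : Fin N → ℝ := fun k => ∑ l, (W (k-l) * a (k-l)) * b l with hX
  set Y : Fin N → ℝ := fun k => ∑ l, a (k-l) * (W l * b l) with hY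
  have hWpos : ∀ k, (0:ℝ) < W k := fun k => lt_of_lt_of_le one_pos (hW1 k)
  have hXY : ∀ k, W k * c k ≤ 2*(X k + Y k) := by
    intro k
    calc W k * c k ≤ W k * ∑ l, a (k-l) * b l :=
          mul_le_mul_of_nonneg_left (hconv k) (hWpos k).le
      _ = ∑ l, W k * (a (k-l) * b l) := Finset.mul_sum _ _ _
      _ ≤ ∑ l, 2*(W (k-l) + W l) * (a (k-l) * b l) := by
          apply Finset.sum_le_sum
          intro l _
          exact mul_le_mul_of_nonneg_right (htri k l) (mul_nonneg (ha _) (hb _))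
      _ = 2*(X k + Y k) := by
          rw [hX, hY]
          beta_reduce
          rw [← Finset.sum_add_distrib, Finset.mul_sum]
          apply Finset.sum_congr rfl
          intro l _
          ring
  have hXnn : ∀ k, 0 ≤ X k := by
    intro k
    apply Finset.sum_nonneg
    intro l _
    exact mul_nonneg (mul_nonneg (hWpos _).le (ha _)) (hb _)
  have hYnn : ∀ k, 0 ≤ Y k := by
    intro k
    apply Finset.sum_nonneg
    intro l _
    exact mul_nonneg (ha _) (mul_nonneg (hWpos _).le (hb _))
  have hsq : ∀ k, (W k * c k)^2 ≤ 8*((X k)^2 + (Y k)^2) := by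
    intro k
    have h0 : 0 ≤ W k * c k := mul_nonneg (hWpos k).le (hc k)
    nlinarith [hXY k, h0, sq_nonneg (X k - Y k), hXnn k, hYnn k]
  have hYoungX : ∑ k : Fin N, (X k)^2 ≤ (∑ k : Fin N, (W k * a k)^2) * (∑ l : Fin N, b l)^2 :=
    young N (fun k => W k * a k) b hb
  have hYrw : ∀ k, Y k = ∑ l, (W (k-l) * b (k-l)) * a l := by
    intro k
    rw [hY]
    beta_reduce
    apply Fintype.sum_equiv (Equiv.subLeft k)
      (fun l => a (k-l) * (W l * b l)) (fun l => (W (k-l) * b (k-l)) * a l)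
    intro x
    simp only [Equiv.subLeft_apply, sub_sub_cancel]
    ring
  have hYoungY : ∑ k : Fin N, (Y k)^2 ≤ (∑ k : Fin N, (W k * b k)^2) * (∑ l : Fin N, a l)^2 := by
    rw [Finset.sum_congr rfl (fun k _ => congrArg (·^2) (hYrw k))]
    exact young N (fun k => W k * b k) a ha
  calc ∑ k : Fin N, (W k * c k)^2 ≤ ∑ k : Fin N, 8*((X k)^2 + (Y k)^2) :=
        Finset.sum_le_sum (fun k _ => hsq k)
    _ = 8*((∑ k : Fin N, (X k)^2) + (∑ k : Fin N, (Y k)^2)) := by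
        rw [← Finset.sum_add_distrib, Finset.mul_sum]
    _ ≤ 8*((∑ k : Fin N, (W k * a k)^2) * (∑ l : Fin N, b l)^2
        + (∑ l : Fin N, a l)^2 * (∑ k : Fin N, (W k * b k)^2)) := by
        have := hYoungY
        nlinarith [hYoungX, hYoungY]

lemma l1_sq_le (N : ℕ) [NeZero N] (W q : Fin N → ℝ) (hW : ∀ k, (0:ℝ) < W k) (hq : ∀ k, 0 ≤ q k) :
    (∑ l : Fin N, q l)^2 ≤ (∑ l : Fin N, ((W l)⁻¹)^2) * (∑ l : Fin N, (W l * q l)^2) := by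
  have h1 : ∀ l : Fin N, q l = (W l)⁻¹ * (W l * q l) := by
    intro l
    rw [inv_mul_eq_div, mul_comm (W l) (q l), mul_div_assoc, div_self (hW l).ne', mul_one]
  calc (∑ l : Fin N, q l)^2 = (∑ l : Fin N, (W l)⁻¹ * (W l * q l))^2 := by
        rw [Finset.sum_congr rfl (fun l _ => h1 l)]
    _ ≤ (∑ l : Fin N, ((W l)⁻¹)^2) * (∑ l : Fin N, (W l * q l)^2) :=
        Finset.sum_mul_sq_le_sq_mul_sq Finset.univ _ _
lemma lamd_lower (N k : ℕ) (hN : 0 < N) (hk : k < N) :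
    16 * ((min k (N-k) : ℕ):ℝ)^2 ≤ lamd N k := by
  have hNpos : (0:ℝ) < N := Nat.cast_pos.mpr hN
  have hpi := Real.pi_pos
  have hsin : lamd N k = 4*(N:ℝ)^2 * Real.sin (Real.pi * k / N)^2 := by
    rw [lamd]
    have hhalf := Real.sin_sq_eq_half_sub (Real.pi * (k:ℝ) / N)
    have harg : 2 * (Real.pi * (k:ℝ) / N) = 2 * Real.pi * k / N := by ring
    rw [harg] at hhalf
    nlinarith [hhalf]
  have hm2 : 2 * (min k (N-k)) ≤ N := by omega
  have key : (2:ℝ) * (min k (N-k) : ℕ) / N ≤ Real.sin (Real.pi * k / N) := by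
    rcases le_or_gt (2*k) N with hc | hc
    · have hmk : min k (N-k) = k := by omega
      have hx0 : 0 ≤ Real.pi * k / N := by positivity
      have hx1 : Real.pi * k / N ≤ Real.pi / 2 := by
        rw [div_le_div_iff₀ hNpos (by norm_num : (0:ℝ) < 2)]
        have : (2:ℝ) * k ≤ N := by exact_mod_cast hc
        nlinarith
      have hms := Real.mul_le_sin hx0 hx1
      calc (2:ℝ) * (min k (N-k) : ℕ) / N = 2 / Real.pi * (Real.pi * k / N) := by
            rw [hmk]; field_simp
        _ ≤ Real.sin (Real.pi * k / N) := hms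
    · have hmk : min k (N-k) = N - k := by omega
      have hcast : ((N - k : ℕ):ℝ) = (N:ℝ) - k := by
        have : k ≤ N := hk.le
        push_cast [this]
        ring
      have hsub : Real.sin (Real.pi * k / N) = Real.sin (Real.pi * ((N:ℝ) - k) / N) := by
        rw [← Real.sin_pi_sub]
        congr 1
        field_simp
      rw [hsub, hmk, hcast]
      have h2 : (0:ℝ) < (N:ℝ) - k := by
        have : (k:ℝ) < N := by exact_mod_cast hk
        linarith
      have hx0 : 0 ≤ Real.pi * ((N:ℝ) - k) / N := by positivity
      have hx1 : Real.pi * ((N:ℝ) - k) / N ≤ Real.pi / 2 := by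
        rw [div_le_div_iff₀ hNpos (by norm_num : (0:ℝ) < 2)]
        have : (N:ℝ) < 2 * k := by exact_mod_cast hc
        nlinarith
      have hms := Real.mul_le_sin hx0 hx1
      calc (2:ℝ) * ((N:ℝ) - k) / N = 2 / Real.pi * (Real.pi * ((N:ℝ) - k) / N) := by
            field_simp
        _ ≤ Real.sin (Real.pi * ((N:ℝ) - k) / N) := hms
  have hq : (0:ℝ) ≤ 2 * (min k (N-k) : ℕ) / N := by positivity
  rw [hsin]
  have hsq := mul_self_le_mul_self hq key
  have : ((2:ℝ) * (min k (N-k) : ℕ) / N) * ((2:ℝ) * (min k (N-k) : ℕ) / N)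
      = 4 * ((min k (N-k) : ℕ):ℝ)^2 / (N:ℝ)^2 := by
    field_simp
    ring
  rw [this] at hsq
  have hN2 : (0:ℝ) < (N:ℝ)^2 := by positivity
  calc 16 * ((min k (N-k) : ℕ):ℝ)^2
      = 4*(N:ℝ)^2 * (4 * ((min k (N-k) : ℕ):ℝ)^2 / (N:ℝ)^2) := by field_simp; ring
    _ ≤ 4*(N:ℝ)^2 * Real.sin (Real.pi * k / N)^2 := by
        apply mul_le_mul_of_nonneg_left _ (by positivity)
        calc 4 * ((min k (N-k) : ℕ):ℝ)^2 / (N:ℝ)^2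
            ≤ Real.sin (Real.pi * k / N) * Real.sin (Real.pi * k / N) := hsq
          _ = Real.sin (Real.pi * k / N)^2 := by ring

noncomputable def Ksum (β : ℝ) : ℝ := ∑' m : ℕ, ((m:ℝ)+1)^(-(2*β))

lemma Ksum_summable {β : ℝ} (hβ : 1/2 < β) :
    Summable (fun m : ℕ => ((m:ℝ)+1)^(-(2*β))) := by
  have h1 : Summable (fun n : ℕ => ((n:ℝ)^(2*β))⁻¹) := by
    rw [Real.summable_nat_rpow_inv]
    linarith
  have h2 : Summable (fun n : ℕ => (((n+1:ℕ):ℝ)^(2*β))⁻¹) := by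
    exact (summable_nat_add_iff 1).mpr h1
  apply h2.congr
  intro n
  rw [← Real.rpow_neg (by positivity)]
  congr 1
  push_cast
  ring

lemma one_le_Ksum {β : ℝ} (hβ : 1/2 < β) : 1 ≤ Ksum β := by
  have := (Ksum_summable hβ).le_tsum 0 (fun i _ => Real.rpow_nonneg (by positivity) _)
  simpa [Ksum] using this

lemma S_bound {β : ℝ} (hβ : 1/2 < β) (hβ1 : β ≤ 1) (N : ℕ) (hN : 1 ≤ N) :
    ∑ k ∈ Finset.range N, (1 + lamd N k)^(-β) ≤ 2 * Ksum β := by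
  set f : ℕ → ℝ := fun m => ((m:ℝ)+1)^(-(2*β)) with hf
  have hfnn : ∀ m, 0 ≤ f m := fun m => Real.rpow_nonneg (by positivity) _
  have hfanti : ∀ m n : ℕ, m ≤ n → f n ≤ f m := by
    intro m n hmn
    apply Real.rpow_le_rpow_of_nonpos (by positivity) (by exact_mod_cast (by omega : m+1 ≤ n+1)) (by linarith)
  have hterm : ∀ k, k < N → (1 + lamd N k)^(-β) ≤ f k + f (N - k) := by
    intro k hk
    have hlow := lamd_lower N k (by omega) hk
    set m : ℕ := min k (N-k) with hm
    have hstep1 : (1 + lamd N k)^(-β) ≤ f m := by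
      have h1 : ((m:ℝ)+1)^2 ≤ 1 + lamd N k := by
        have hm01 : (m:ℝ) = 0 ∨ 1 ≤ (m:ℝ) := by
          rcases Nat.eq_zero_or_pos m with h | h
          · left; exact_mod_cast h
          · right; exact_mod_cast h
        have : ((m:ℝ)+1)^2 ≤ 1 + 16*(m:ℝ)^2 := by
          rcases hm01 with h | h <;> nlinarith [h]
        linarith
      have h2 : (0:ℝ) < ((m:ℝ)+1)^2 := by positivity
      calc (1 + lamd N k)^(-β) ≤ (((m:ℝ)+1)^2)^(-β) :=
            Real.rpow_le_rpow_of_nonpos h2 h1 (by linarith)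
        _ = f m := by
            rw [hf]
            beta_reduce
            rw [← Real.rpow_natCast ((m:ℝ)+1) 2, ← Real.rpow_mul (by positivity)]
            norm_num
    have hstep2 : f m ≤ f k + f (N - k) := by
      rcases min_cases k (N-k) with ⟨h1, _⟩ | ⟨h1, _⟩
      · rw [hm, h1]
        have := hfnn (N - k)
        linarith
      · rw [hm, h1]
        have := hfnn k
        linarith
    linarith
  have hs1 : ∑ k ∈ Finset.range N, f k ≤ Ksum β :=
    (Ksum_summable hβ).sum_le_tsum (Finset.range N) (fun i _ => hfnn i)
  have hs2 : ∑ k ∈ Finset.range N, f (N - k) ≤ Ksum β := by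
    have hrefl : ∑ k ∈ Finset.range N, f (N - k) = ∑ j ∈ Finset.range N, f (j + 1) := by
      rw [← Finset.sum_range_reflect (fun j => f (j+1)) N]
      apply Finset.sum_congr rfl
      intro k hk
      have : k < N := Finset.mem_range.mp hk
      congr 1
      omega
    rw [hrefl]
    calc ∑ j ∈ Finset.range N, f (j+1) ≤ ∑ j ∈ Finset.range N, f j :=
          Finset.sum_le_sum (fun j _ => hfanti j (j+1) (by omega))
      _ ≤ Ksum β := hs1
  calc ∑ k ∈ Finset.range N, (1 + lamd N k)^(-β)
      ≤ ∑ k ∈ Finset.range N, (f k + f (N - k)) := by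
        apply Finset.sum_le_sum
        intro k hk
        exact hterm k (Finset.mem_range.mp hk)
    _ = ∑ k ∈ Finset.range N, f k + ∑ k ∈ Finset.range N, f (N - k) := Finset.sum_add_distrib
    _ ≤ 2 * Ksum β := by linarith
lemma fin_sub_dvd (N : ℕ) [NeZero N] (k l : Fin N) :
    (N:ℤ) ∣ ((((k - l : Fin N) : ℕ) : ℤ) - (((k:ℕ):ℤ) - ((l:ℕ):ℤ))) := by
  have hl : (l:ℕ) ≤ N := le_of_lt l.isLt
  have hval : ((k - l : Fin N) : ℕ) = ((N - (l:ℕ)) + (k:ℕ)) % N := by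
    rw [Fin.sub_def]
  set X : ℤ := ((N:ℤ) - ((l:ℕ):ℤ)) + ((k:ℕ) : ℤ) with hX
  have hcast : ((((N - (l:ℕ)) + (k:ℕ)) % N : ℕ) : ℤ) = X % (N:ℤ) := by
    push_cast [Nat.cast_sub hl]
    rfl
  rw [hval, hcast]
  have hemod : X % (N:ℤ) = X - (N:ℤ) * (X / N) := Int.emod_def X N
  rw [hemod]
  refine ⟨1 - (X / (N:ℤ)), ?_⟩
  have hXe : X = ((N:ℤ) - ((l:ℕ):ℤ)) + ((k:ℕ) : ℤ) := hX
  nlinarith [hXe]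

lemma winv_sq (N : ℕ) (β : ℝ) (m : ℕ) :
    ((Wh N β ((m:ℕ):ℤ))⁻¹)^2 = (1 + lamd N m)^(-β) := by
  have hx : (0:ℝ) ≤ 1 + lamdZ N ((m:ℕ):ℤ) := by linarith [lamdZ_nonneg N ((m:ℕ):ℤ)]
  rw [Wh, ← Real.rpow_neg hx, ← Real.rpow_natCast ((1 + lamdZ N ((m:ℕ):ℤ)) ^ (-(β/2))) 2,
    ← Real.rpow_mul hx, lamdZ_natCast]
  norm_num

/-- For `1/2 < β ≤ 1`, `H_N^β` with the pointwise product is an algebra, with a norm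
constant uniform in (odd) `N`: `‖uv‖_{H_N^β} ≤ c ‖u‖_{H_N^β} ‖v‖_{H_N^β}`. -/
theorem stmt_8 (β : ℝ) (hβ1 : 1/2 < β) (hβ2 : β ≤ 1) :
    ∃ c : ℝ, 0 < c ∧ ∀ N : ℕ, Odd N → 1 ≤ N → ∀ u v : Fin N → ℝ,
      sobNorm N β (fun j => u j * v j) ≤ c * sobNorm N β u * sobNorm N β v := by
  have hβ0 : 0 < β := by linarith
  have hK1 : 1 ≤ Ksum β := one_le_Ksum hβ1
  refine ⟨Real.sqrt (32 * Ksum β), Real.sqrt_pos.mpr (by linarith), ?_⟩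
  intro N hodd hN u v
  haveI : NeZero N := ⟨by omega⟩
  have hNpos : 0 < N := by omega
  -- the weight and coefficient functions
  set W : Fin N → ℝ := fun k => Wh N β ((k:ℕ):ℤ) with hWdef
  have hQ : ∀ f : Fin N → ℝ,
      sobNormSq N β f = ∑ k : Fin N, (W k * ‖fh N f ((k:ℕ):ℤ)‖)^2 := by
    intro f
    rw [sobNormSq_eq N hodd β f,
      ← Fin.sum_univ_eq_sum_range (fun m => (1 + lamd N m)^β * Complex.normSq (fh N f (m:ℤ))) N]
    apply Finset.sum_congr rfl
    intro k _
    rw [mul_pow, hWdef]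
    beta_reduce
    rw [Wh_sq, lamdZ_natCast, Complex.sq_norm]
  have hW1 : ∀ k : Fin N, 1 ≤ W k := fun k => one_le_Wh N hβ0.le _
  have hWpos : ∀ k : Fin N, (0:ℝ) < W k := fun k => Wh_pos N hβ0.le _
  have hWsub : ∀ k l : Fin N, W (k - l) = Wh N β (((k:ℕ):ℤ) - ((l:ℕ):ℤ)) := by
    intro k l
    exact Wh_mod N β _ _ (fin_sub_dvd N k l)
  have htri : ∀ k l : Fin N, W k ≤ 2 * (W (k - l) + W l) := by
    intro k l
    rw [hWsub k l]
    exact Wh_triangle N hβ0 hβ2 _ _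
  have hfsub : ∀ (f : Fin N → ℝ) (k l : Fin N),
      fh N f (((k:ℕ):ℤ) - ((l:ℕ):ℤ)) = fh N f (((k - l : Fin N):ℕ):ℤ) := by
    intro f k l
    apply fh_mod
    rw [show ((((k:ℕ):ℤ) - ((l:ℕ):ℤ)) - (((k - l : Fin N):ℕ):ℤ))
        = -(((((k - l : Fin N):ℕ):ℤ)) - (((k:ℕ):ℤ) - ((l:ℕ):ℤ))) by ring]
    exact dvd_neg.mpr (fin_sub_dvd N k l)
  have hconv : ∀ k : Fin N,
      ‖fh N (fun j => u j * v j) ((k:ℕ):ℤ)‖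
        ≤ ∑ l : Fin N, ‖fh N u (((k - l : Fin N):ℕ):ℤ)‖
            * ‖fh N v ((l:ℕ):ℤ)‖ := by
    intro k
    rw [← fh_conv N hNpos u v ((k:ℕ):ℤ)]
    calc ‖∑ l : Fin N, fh N u (((k:ℕ):ℤ) - ((l:ℕ):ℤ)) * fh N v ((l:ℕ):ℤ)‖
        ≤ ∑ l : Fin N, ‖fh N u (((k:ℕ):ℤ) - ((l:ℕ):ℤ)) * fh N v ((l:ℕ):ℤ)‖ :=
          norm_sum_le _ _
      _ = ∑ l : Fin N, ‖fh N u (((k - l : Fin N):ℕ):ℤ)‖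
            * ‖fh N v ((l:ℕ):ℤ)‖ := by
          apply Finset.sum_congr rfl
          intro l _
          rw [norm_mul, hfsub u k l]
  have hkey := key_est N W
    (fun k => ‖fh N u ((k:ℕ):ℤ)‖)
    (fun k => ‖fh N v ((k:ℕ):ℤ)‖)
    (fun k => ‖fh N (fun j => u j * v j) ((k:ℕ):ℤ)‖)
    hW1 htri (fun k => norm_nonneg _) (fun k => norm_nonneg _)
    (fun k => norm_nonneg _) hconv
  -- the four sums
  have hQu : sobNormSq N β u = ∑ k : Fin N, (W k * ‖fh N u ((k:ℕ):ℤ)‖)^2 := hQ u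
  have hQv : sobNormSq N β v = ∑ k : Fin N, (W k * ‖fh N v ((k:ℕ):ℤ)‖)^2 := hQ v
  have hQuv : sobNormSq N β (fun j => u j * v j)
      = ∑ k : Fin N, (W k * ‖fh N (fun j => u j * v j) ((k:ℕ):ℤ)‖)^2 :=
    hQ (fun j => u j * v j)
  have hQu0 : 0 ≤ sobNormSq N β u := by
    rw [hQu]; exact Finset.sum_nonneg (fun k _ => sq_nonneg _)
  have hQv0 : 0 ≤ sobNormSq N β v := by
    rw [hQv]; exact Finset.sum_nonneg (fun k _ => sq_nonneg _)
  -- ℓ¹ bounds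
  have hSinv : ∑ l : Fin N, ((W l)⁻¹)^2 ≤ 2 * Ksum β := by
    calc ∑ l : Fin N, ((W l)⁻¹)^2 = ∑ k ∈ Finset.range N, (1 + lamd N k)^(-β) := by
          rw [← Fin.sum_univ_eq_sum_range (fun m => (1 + lamd N m)^(-β)) N]
          exact Finset.sum_congr rfl (fun k _ => winv_sq N β (k:ℕ))
      _ ≤ 2 * Ksum β := S_bound hβ1 hβ2 N hN
  have hl1u : (∑ l : Fin N, ‖fh N u ((l:ℕ):ℤ)‖)^2
      ≤ 2 * Ksum β * sobNormSq N β u := by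
    calc (∑ l : Fin N, ‖fh N u ((l:ℕ):ℤ)‖)^2
        ≤ (∑ l : Fin N, ((W l)⁻¹)^2) * (∑ l : Fin N, (W l * ‖fh N u ((l:ℕ):ℤ)‖)^2) :=
          l1_sq_le N W _ hWpos (fun k => norm_nonneg _)
      _ ≤ 2 * Ksum β * sobNormSq N β u := by
          rw [hQu]
          apply mul_le_mul_of_nonneg_right hSinv
          exact Finset.sum_nonneg (fun k _ => sq_nonneg _)
  have hl1v : (∑ l : Fin N, ‖fh N v ((l:ℕ):ℤ)‖)^2
      ≤ 2 * Ksum β * sobNormSq N β v := by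
    calc (∑ l : Fin N, ‖fh N v ((l:ℕ):ℤ)‖)^2
        ≤ (∑ l : Fin N, ((W l)⁻¹)^2) * (∑ l : Fin N, (W l * ‖fh N v ((l:ℕ):ℤ)‖)^2) :=
          l1_sq_le N W _ hWpos (fun k => norm_nonneg _)
      _ ≤ 2 * Ksum β * sobNormSq N β v := by
          rw [hQv]
          apply mul_le_mul_of_nonneg_right hSinv
          exact Finset.sum_nonneg (fun k _ => sq_nonneg _)
  -- master bound
  have hmaster : sobNormSq N β (fun j => u j * v j)
      ≤ 32 * Ksum β * (sobNormSq N β u * sobNormSq N β v) := by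
    rw [hQuv]
    calc ∑ k : Fin N, (W k * ‖fh N (fun j => u j * v j) ((k:ℕ):ℤ)‖)^2
        ≤ 8*((∑ k : Fin N, (W k * ‖fh N u ((k:ℕ):ℤ)‖)^2)
              * (∑ l : Fin N, ‖fh N v ((l:ℕ):ℤ)‖)^2
            + (∑ l : Fin N, ‖fh N u ((l:ℕ):ℤ)‖)^2
              * (∑ k : Fin N, (W k * ‖fh N v ((k:ℕ):ℤ)‖)^2)) := hkey
      _ ≤ 8*((sobNormSq N β u) * (2 * Ksum β * sobNormSq N β v)
            + (2 * Ksum β * sobNormSq N β u) * (sobNormSq N β v)) := by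
          have h1 : ∑ k : Fin N, (W k * ‖fh N u ((k:ℕ):ℤ)‖)^2 = sobNormSq N β u :=
            hQu.symm
          have h2 : ∑ k : Fin N, (W k * ‖fh N v ((k:ℕ):ℤ)‖)^2 = sobNormSq N β v :=
            hQv.symm
          rw [h1, h2]
          have hb1 : 0 ≤ (∑ l : Fin N, ‖fh N u ((l:ℕ):ℤ)‖)^2 := sq_nonneg _
          nlinarith [hl1u, hl1v, hQu0, hQv0]
      _ = 32 * Ksum β * (sobNormSq N β u * sobNormSq N β v) := by ring
  -- take square roots
  rw [sobNorm, sobNorm, sobNorm]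
  calc Real.sqrt (sobNormSq N β (fun j => u j * v j))
      ≤ Real.sqrt (32 * Ksum β * (sobNormSq N β u * sobNormSq N β v)) :=
        Real.sqrt_le_sqrt hmaster
    _ = Real.sqrt (32 * Ksum β) * Real.sqrt (sobNormSq N β u) * Real.sqrt (sobNormSq N β v) := by
        rw [Real.sqrt_mul (by linarith), Real.sqrt_mul hQu0, mul_assoc]
end

section
/- For every β > 1/2 there exists c > 0 independent of N such that for all u, v ∈ H_N one has both ‖uv‖_{H_N^0} ≤ c ‖u‖_{H_N^0} ‖v‖_{H_N^β} and the dual estimate ‖uv‖_{H_N^{-β}} ≤ c ‖u‖_{H_N^0} ‖v‖_{H_N^0}. -/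
open Finset Real

section Aux

lemma cos_geom_sum_zero {N : ℕ} (hN : 1 ≤ N) (e : ℤ) (he : ¬ (N:ℤ) ∣ e) :
    ∑ m ∈ Finset.range N, Real.cos (2 * π * m * e / N) = 0 := by
  have hNne : (N:ℝ) ≠ 0 := by positivity
  set z : ℂ := Complex.exp ((2 * π * e / N : ℝ) * Complex.I) with hz
  have hNc : (N:ℂ) ≠ 0 := by exact_mod_cast Nat.cast_ne_zero.2 (by omega)
  have hz1 : z ≠ 1 := by
    rw [hz]
    intro h
    rw [Complex.exp_eq_one_iff] at h
    obtain ⟨n, hn⟩ := h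
    apply he
    have h2 : (2 * π * e / N : ℝ) = n * (2 * π) := by
      have := congrArg Complex.im hn
      simpa using this
    have hπ : (0:ℝ) < π := Real.pi_pos
    have he' : (e : ℝ) = (N:ℝ) * n := by
      field_simp at h2
      nlinarith [h2]
    exact ⟨n, by exact_mod_cast he'⟩
  have hzN : z ^ N = 1 := by
    rw [hz, ← Complex.exp_nat_mul]
    have : (N:ℂ) * ((2 * π * e / N : ℝ) * Complex.I) = (e:ℤ) * (2 * π * Complex.I) := by
      push_cast
      field_simp [hNc]
    rw [this, Complex.exp_int_mul_two_pi_mul_I]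
  have hsum : ∑ m ∈ Finset.range N, z ^ m = 0 := by
    rw [geom_sum_eq hz1, hzN, sub_self, zero_div]
  have : ∑ m ∈ Finset.range N, Real.cos (2 * π * m * e / N)
      = (∑ m ∈ Finset.range N, z ^ m).re := by
    rw [Complex.re_sum]
    refine Finset.sum_congr rfl fun m _ => ?_
    rw [hz, ← Complex.exp_nat_mul]
    have : (m:ℂ) * ((2 * π * e / N : ℝ) * Complex.I) = ((2 * π * m * e / N : ℝ) : ℂ) * Complex.I := by
      push_cast; ring
    rw [this, Complex.exp_ofReal_mul_I_re]
  rw [this, hsum, Complex.zero_re]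

lemma sum_cos_split {N : ℕ} (hN : Odd N) (e : ℤ) :
    ∑ m ∈ Finset.range N, Real.cos (2*π*m*e/N)
      = 1 + ∑ m ∈ Finset.range ((N-1)/2), 2 * Real.cos (2*π*(m+1)*e/N) := by
  obtain ⟨M, hM⟩ := hN
  have h1 : 1 ≤ N := by omega
  have hNne : (N:ℝ) ≠ 0 := by positivity
  set c : ℕ → ℝ := fun m => Real.cos (2*π*m*e/N) with hc
  have hrefl : ∀ m, 1 ≤ m → m ≤ N → c (N - m) = c m := by
    intro m h1m h2m
    show Real.cos (2*π*(N-m : ℕ)*e/N) = Real.cos (2*π*m*e/N)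
    have hcast : ((N - m : ℕ) : ℝ) = (N:ℝ) - m := by
      rw [Nat.cast_sub h2m]
    rw [hcast]
    have harg : 2*π*((N:ℝ)-m)*e/N = (e:ℤ) * (2*π) - 2*π*m*e/N := by
      field_simp
    rw [harg, Real.cos_int_mul_two_pi_sub]
  have hM2 : (N-1)/2 = M := by omega
  have e1 : ∑ m ∈ Finset.range N, c m
      = ∑ m ∈ Finset.range (M+1), c m + ∑ m ∈ Finset.Ico (M+1) N, c m := by
    simp only [Finset.range_eq_Ico]
    exact (Finset.sum_Ico_consecutive c (Nat.zero_le (M+1)) (by omega : M+1 ≤ N)).symm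
  have e2 : ∑ m ∈ Finset.Ico (M+1) N, c m = ∑ m ∈ Finset.range M, c (M+1+m) := by
    rw [Finset.sum_Ico_eq_sum_range]
    have : N - (M+1) = M := by omega
    rw [this]
  have e3 : ∑ m ∈ Finset.range (M+1), c m = c 0 + ∑ m ∈ Finset.range M, c (m+1) := by
    rw [Finset.sum_range_succ' c M, add_comm]
  have hsplit : ∑ m ∈ Finset.range N, c m
      = c 0 + (∑ m ∈ Finset.range M, c (m+1) + ∑ m ∈ Finset.range M, c (M+1+m)) := by
    rw [e1, e2, e3]; ring
  have hsecond : ∑ m ∈ Finset.range M, c (M+1+m) = ∑ m ∈ Finset.range M, c (m+1) := by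
    rw [← Finset.sum_range_reflect (fun m => c (M+1+m)) M]
    refine Finset.sum_congr rfl fun k hk => ?_
    simp only [Finset.mem_range] at hk
    have : M + 1 + (M - 1 - k) = N - (k+1) := by omega
    rw [this, hrefl (k+1) (by omega) (by omega)]
  have hc0 : c 0 = 1 := by
    show Real.cos (2*π*(0:ℕ)*e/N) = 1
    norm_num
  rw [hsplit, hsecond, hc0, hM2]
  rw [← Finset.sum_add_distrib]
  congr 1
  refine Finset.sum_congr rfl fun k _ => ?_
  have : c (k+1) + c (k+1) = 2 * c (k+1) := by ring
  rw [this]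
  show 2 * Real.cos (2*π*((k+1:ℕ):ℝ)*e/N) = 2 * Real.cos (2*π*(k+1)*e/N)
  push_cast
  ring_nf

lemma kernel {N : ℕ} (hN : Odd N) (h1 : 1 ≤ N) (j j' : Fin N) :
    ∑ m ∈ Finset.range ((N-1)/2 + 1),
        (phiN N m j * phiN N m j' + psiN N m j * psiN N m j')
      = if j = j' then (N:ℝ) else 0 := by
  have hNne : (N:ℝ) ≠ 0 := by positivity
  have h2 : Real.sqrt 2 * Real.sqrt 2 = 2 := Real.mul_self_sqrt (by norm_num)
  set e : ℤ := (j:ℕ) - (j':ℕ) with he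
  have heR : (e:ℝ) = (j:ℕ) - (j':ℕ) := by rw [he]; push_cast; ring
  have hterm : ∀ m ∈ Finset.range ((N-1)/2 + 1),
      phiN N m j * phiN N m j' + psiN N m j * psiN N m j'
        = if m = 0 then 1 else 2 * Real.cos (2*π*m*e/N) := by
    intro m _
    rcases eq_or_ne m 0 with rfl | hm
    · simp [phiN, psiN]
    · simp only [phiN, psiN, if_neg hm]
      have harg : 2*π*m*((j:ℕ):ℝ)/N - 2*π*m*((j':ℕ):ℝ)/N = 2*π*m*(e:ℝ)/N := by
        rw [heR]; ring
      rw [show Real.sqrt 2 * Real.cos (2*π*m*((j:ℕ):ℝ)/N) * (Real.sqrt 2 * Real.cos (2*π*m*((j':ℕ):ℝ)/N))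
            + Real.sqrt 2 * Real.sin (2*π*m*((j:ℕ):ℝ)/N) * (Real.sqrt 2 * Real.sin (2*π*m*((j':ℕ):ℝ)/N))
          = (Real.sqrt 2 * Real.sqrt 2) * (Real.cos (2*π*m*((j:ℕ):ℝ)/N) * Real.cos (2*π*m*((j':ℕ):ℝ)/N)
            + Real.sin (2*π*m*((j:ℕ):ℝ)/N) * Real.sin (2*π*m*((j':ℕ):ℝ)/N)) from by ring,
        h2, ← Real.cos_sub, harg]
  rw [Finset.sum_congr rfl hterm, Finset.sum_range_succ']
  simp only [Nat.succ_ne_zero, if_neg, if_pos, Nat.add_eq_zero, and_false, ite_false, ite_true]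
  have hcast : ∀ m : ℕ, 2 * Real.cos (2*π*((m+1:ℕ):ℝ)*e/N) = 2 * Real.cos (2*π*((m:ℝ)+1)*e/N) := by
    intro m; push_cast; ring
  rcases eq_or_ne j j' with rfl | hjj
  · rw [if_pos rfl]
    have he0 : e = 0 := by rw [he]; ring
    have : ∀ m ∈ Finset.range ((N-1)/2), 2 * Real.cos (2*π*((m+1:ℕ):ℝ)*e/N) = 2 := by
      intro m _
      rw [he0]
      norm_num
    rw [Finset.sum_congr rfl this, Finset.sum_const, Finset.card_range]
    obtain ⟨M, hM⟩ := hN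
    have : (N-1)/2 = M := by omega
    rw [this, hM]
    push_cast
    ring
  · rw [if_neg hjj]
    have he0 : e ≠ 0 := by
      rw [he]
      simp only [ne_eq, sub_eq_zero, Int.natCast_inj]
      exact fun h => hjj (Fin.ext h)
    have hlt : e.natAbs < N := by
      have := j.isLt; have := j'.isLt
      omega
    have hdvd : ¬ (N:ℤ) ∣ e := by
      rintro ⟨k, hk⟩
      rcases lt_trichotomy k 0 with hk0 | rfl | hk0
      · have : (N:ℤ) ≤ -e := by
          rw [hk]
          nlinarith [Int.le_of_lt hk0]
        omega
      · simp at hk; omega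
      · have : (N:ℤ) ≤ e := by
          rw [hk]
          nlinarith
        omega
    have := cos_geom_sum_zero h1 e hdvd
    rw [sum_cos_split hN e] at this
    have goal : ∑ m ∈ Finset.range ((N-1)/2), 2 * Real.cos (2*π*((m+1:ℕ):ℝ)*e/N)
        = ∑ m ∈ Finset.range ((N-1)/2), 2 * Real.cos (2*π*((m:ℝ)+1)*e/N) :=
      Finset.sum_congr rfl fun m _ => hcast m
    rw [goal]
    linarith [this]

lemma parseval {N : ℕ} (hN : Odd N) (h1 : 1 ≤ N) (f : Fin N → ℝ) :
    sobNormSq N 0 f = (1/(N:ℝ)) * ∑ j, (f j)^2 := by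
  have hNne : (N:ℝ) ≠ 0 := by positivity
  have expand : ∀ g : Fin N → ℝ, ip N f g ^ 2
      = (1/(N:ℝ))^2 * ∑ j0, ∑ j1, f j0 * f j1 * (g j0 * g j1) := by
    intro g
    have hsq : (∑ j, f j * g j)^2 = ∑ j0, ∑ j1, (f j0 * g j0) * (f j1 * g j1) := by
      rw [sq, Finset.sum_mul_sum]
    rw [ip, mul_pow, hsq]
    congr 1
    refine Finset.sum_congr rfl fun j0 _ => Finset.sum_congr rfl fun j1 _ => by ring
  calc sobNormSq N 0 f
      = ∑ m ∈ Finset.range ((N-1)/2 + 1), ((ip N f (phiN N m))^2 + (ip N f (psiN N m))^2) := by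
        unfold sobNormSq
        refine Finset.sum_congr rfl fun m _ => ?_
        rw [Real.rpow_zero, one_mul]
    _ = ∑ m ∈ Finset.range ((N-1)/2 + 1), (1/(N:ℝ))^2 * ∑ j0, ∑ j1,
          f j0 * f j1 * (phiN N m j0 * phiN N m j1 + psiN N m j0 * psiN N m j1) := by
        refine Finset.sum_congr rfl fun m _ => ?_
        rw [expand, expand, ← mul_add, ← Finset.sum_add_distrib]
        congr 1
        refine Finset.sum_congr rfl fun j0 _ => ?_
        rw [← Finset.sum_add_distrib]
        refine Finset.sum_congr rfl fun j1 _ => by ring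
    _ = (1/(N:ℝ))^2 * ∑ j0, ∑ j1, f j0 * f j1 *
          ∑ m ∈ Finset.range ((N-1)/2 + 1),
            (phiN N m j0 * phiN N m j1 + psiN N m j0 * psiN N m j1) := by
        rw [← Finset.mul_sum, Finset.sum_comm]
        congr 1
        refine Finset.sum_congr rfl fun j0 _ => ?_
        rw [Finset.sum_comm]
        refine Finset.sum_congr rfl fun j1 _ => ?_
        rw [Finset.mul_sum]
    _ = (1/(N:ℝ))^2 * ∑ j0, f j0 * f j0 * (N:ℝ) := by
        congr 1
        refine Finset.sum_congr rfl fun j0 _ => ?_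
        rw [Finset.sum_congr rfl fun j1 (_ : j1 ∈ Finset.univ) => by rw [kernel hN h1 j0 j1]]
        simp [mul_ite]
    _ = (1/(N:ℝ)) * ∑ j, (f j)^2 := by
        have hs : ∑ j0, f j0 * f j0 * (N:ℝ) = (∑ j, (f j)^2) * N := by
          rw [Finset.sum_mul]
          exact Finset.sum_congr rfl fun j _ => by ring
        rw [hs]
        field_simp

lemma recon {N : ℕ} (hN : Odd N) (h1 : 1 ≤ N) (v : Fin N → ℝ) (j : Fin N) :
    v j = ∑ m ∈ Finset.range ((N-1)/2 + 1),
      (ip N v (phiN N m) * phiN N m j + ip N v (psiN N m) * psiN N m j) := by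
  have hNne : (N:ℝ) ≠ 0 := by positivity
  have key : (1/(N:ℝ)) * ∑ j', v j' * ∑ m ∈ Finset.range ((N-1)/2 + 1),
          (phiN N m j' * phiN N m j + psiN N m j' * psiN N m j)
      = ∑ m ∈ Finset.range ((N-1)/2 + 1),
        (ip N v (phiN N m) * phiN N m j + ip N v (psiN N m) * psiN N m j) := by
    simp only [ip, Finset.mul_sum, Finset.sum_mul]
    rw [Finset.sum_comm]
    refine Finset.sum_congr rfl fun m _ => ?_
    rw [← Finset.sum_add_distrib]
    refine Finset.sum_congr rfl fun j' _ => by ring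
  rw [← key]
  rw [Finset.sum_congr rfl fun j' (_ : j' ∈ Finset.univ) => by rw [kernel hN h1 j' j]]
  simp only [mul_ite, mul_zero, Finset.sum_ite_eq', Finset.mem_univ, if_true]
  field_simp

lemma lamd_ge {N m : ℕ} (h1 : 1 ≤ N) (hm : m ≤ (N-1)/2) : 16*(m:ℝ)^2 ≤ lamd N m := by
  have hN0 : (0:ℝ) < N := by positivity
  have hπ : (0:ℝ) < π := Real.pi_pos
  have h2m : (2*m:ℝ) ≤ N := by exact_mod_cast (by omega : 2*m ≤ N)
  have hm0 : (0:ℝ) ≤ (m:ℝ) := Nat.cast_nonneg m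
  have habs : |2 * π * m / N| ≤ π := by
    rw [abs_of_nonneg (by positivity)]
    rw [div_le_iff₀ hN0]
    nlinarith
  have hcos := Real.cos_le_one_sub_mul_cos_sq habs
  have hkey : 2*(N:ℝ)^2*(2/π^2*(2*π*m/N)^2) = 16*(m:ℝ)^2 := by
    field_simp
    ring
  unfold lamd
  nlinarith [sq_nonneg ((N:ℝ))]

lemma g_summable {β : ℝ} (hβ : 1/2 < β) :
    Summable (fun m : ℕ => ((1:ℝ)+16*(m:ℝ)^2)^(-β)) := by
  have h2β : 1 < 2*β := by linarith
  have hsum2 : Summable (fun m : ℕ => ((m:ℝ)^(2*β))⁻¹) := Real.summable_nat_rpow_inv.2 h2β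
  rw [← summable_nat_add_iff 1]
  refine Summable.of_nonneg_of_le (fun n => Real.rpow_nonneg (by positivity) _)
    (fun n => ?_) ((summable_nat_add_iff 1).2 hsum2)
  have hpos : (0:ℝ) < ((n+1:ℕ):ℝ) := by positivity
  have hx : (0:ℝ) < ((n+1:ℕ):ℝ)^2 := by positivity
  have hle : (((n+1:ℕ):ℝ))^2 ≤ 1+16*((n+1:ℕ):ℝ)^2 := by nlinarith [sq_nonneg ((n+1:ℕ):ℝ)]
  have h2 : ((1:ℝ)+16*((n+1:ℕ):ℝ)^2)^(-β) ≤ ((((n+1:ℕ):ℝ))^2)^(-β) :=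
    Real.rpow_le_rpow_of_nonpos hx hle (by linarith)
  have h3 : ((((n+1:ℕ):ℝ))^2)^(-β) = (((n+1:ℕ):ℝ)^(2*β))⁻¹ := by
    rw [← Real.rpow_natCast ((n+1:ℕ):ℝ) 2, ← Real.rpow_mul hpos.le,
      show ((2:ℕ):ℝ)*(-β) = -(2*β) by push_cast; ring, Real.rpow_neg hpos.le]
  exact h3 ▸ h2

lemma tail_bound {β : ℝ} (hβ : 1/2 < β) :
    ∃ S : ℝ, 1 ≤ S ∧ ∀ N : ℕ, 1 ≤ N →
      ∑ m ∈ Finset.range ((N-1)/2 + 1), (1 + lamd N m)^(-β) ≤ S := by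
  set g : ℕ → ℝ := fun m => ((1:ℝ)+16*(m:ℝ)^2)^(-β) with hg
  have hsg : Summable g := g_summable hβ
  refine ⟨max 1 (∑' m, g m), le_max_left _ _, fun N h1 => ?_⟩
  have hterm : ∀ m ∈ Finset.range ((N-1)/2 + 1), (1 + lamd N m)^(-β) ≤ g m := by
    intro m hm
    simp only [Finset.mem_range] at hm
    have hge := lamd_ge h1 (by omega : m ≤ (N-1)/2)
    exact Real.rpow_le_rpow_of_nonpos (by positivity) (by linarith) (by linarith)
  calc ∑ m ∈ Finset.range ((N-1)/2 + 1), (1 + lamd N m)^(-β)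
      ≤ ∑ m ∈ Finset.range ((N-1)/2 + 1), g m := Finset.sum_le_sum hterm
    _ ≤ ∑' m, g m := Summable.sum_le_tsum _ (fun m _ => Real.rpow_nonneg (by positivity) _) hsg
    _ ≤ max 1 (∑' m, g m) := le_max_right _ _

lemma phiN_sq_le (N m : ℕ) (j : Fin N) : (phiN N m j)^2 ≤ 2 := by
  unfold phiN
  rcases eq_or_ne m 0 with rfl | hm
  · norm_num
  · rw [if_neg hm, mul_pow, Real.sq_sqrt (by norm_num : (2:ℝ) ≥ 0)]
    nlinarith [Real.neg_one_le_cos (2 * π * m * (j:ℕ) / N), Real.cos_le_one (2 * π * m * (j:ℕ) / N)]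

lemma psiN_sq_le (N m : ℕ) (j : Fin N) : (psiN N m j)^2 ≤ 2 := by
  unfold psiN
  rw [mul_pow, Real.sq_sqrt (by norm_num : (2:ℝ) ≥ 0)]
  nlinarith [Real.neg_one_le_sin (2 * π * m * (j:ℕ) / N), Real.sin_le_one (2 * π * m * (j:ℕ) / N)]

lemma sobNormSq_nonneg (N : ℕ) (γ : ℝ) (f : Fin N → ℝ) : 0 ≤ sobNormSq N γ f := by
  refine Finset.sum_nonneg fun m _ => mul_nonneg (Real.rpow_nonneg ?_ _) (by positivity)
  have := lamd_nonneg N m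
  linarith

end Aux

/-- For `β > 1/2`: `‖uv‖_{H_N^0} ≤ c ‖u‖_{H_N^0} ‖v‖_{H_N^β}` and the dual estimate
`‖uv‖_{H_N^{-β}} ≤ c ‖u‖_{H_N^0} ‖v‖_{H_N^0}`, with `c` independent of (odd) `N`. -/
theorem stmt_9 (β : ℝ) (hβ : 1/2 < β) :
    ∃ c : ℝ, 0 < c ∧ ∀ N : ℕ, Odd N → 1 ≤ N → ∀ u v : Fin N → ℝ,
      sobNorm N 0 (fun j => u j * v j) ≤ c * sobNorm N 0 u * sobNorm N β v ∧
      sobNorm N (-β) (fun j => u j * v j) ≤ c * sobNorm N 0 u * sobNorm N 0 v := by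
  obtain ⟨S, hS1, hS⟩ := tail_bound hβ
  have hSpos : (0:ℝ) < S := by linarith
  have hsqrtS : (0:ℝ) < Real.sqrt S := Real.sqrt_pos.2 hSpos
  refine ⟨2 * Real.sqrt S, by positivity, fun N hN h1 u v => ?_⟩
  have hNne : (N:ℝ) ≠ 0 := by positivity
  have hNpos : (0:ℝ) < (N:ℝ)⁻¹ := by positivity
  set R := (N-1)/2 + 1 with hR
  have hlam_pos : ∀ m : ℕ, (0:ℝ) < 1 + lamd N m := fun m => by
    have := lamd_nonneg N m; linarith
  -- Parseval bounds
  have hPu : sobNormSq N 0 u = (1/(N:ℝ)) * ∑ j, (u j)^2 := parseval hN h1 u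
  have hPv : sobNormSq N 0 v = (1/(N:ℝ)) * ∑ j, (v j)^2 := parseval hN h1 v
  have hPu0 : 0 ≤ sobNormSq N 0 u := sobNormSq_nonneg N 0 u
  have hPv0 : 0 ≤ sobNormSq N 0 v := sobNormSq_nonneg N 0 v
  have hPβ0 : 0 ≤ sobNormSq N β v := sobNormSq_nonneg N β v
  -- sup bound for v
  have hsup : ∀ j, |v j| ≤ 2 * Real.sqrt S * sobNorm N β v := by
    intro j
    set a : ℕ → ℝ := fun m => ip N v (phiN N m) with ha
    set b : ℕ → ℝ := fun m => ip N v (psiN N m) with hb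
    have h2 : Real.sqrt 2 * Real.sqrt 2 = 2 := Real.mul_self_sqrt (by norm_num)
    have step1 : |v j| ≤ ∑ m ∈ Finset.range R, 2 * Real.sqrt ((a m)^2 + (b m)^2) := by
      rw [recon hN h1 v j]
      refine (Finset.abs_sum_le_sum_abs _ _).trans (Finset.sum_le_sum fun m _ => ?_)
      have hφ : |phiN N m j| ≤ Real.sqrt 2 := by
        have := phiN_sq_le N m j
        have h := Real.sqrt_le_sqrt this
        rwa [Real.sqrt_sq_eq_abs] at h
      have hψ : |psiN N m j| ≤ Real.sqrt 2 := by
        have := psiN_sq_le N m j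
        have h := Real.sqrt_le_sqrt this
        rwa [Real.sqrt_sq_eq_abs] at h
      have hab : |a m| + |b m| ≤ Real.sqrt 2 * Real.sqrt ((a m)^2 + (b m)^2) := by
        have hsq : (|a m| + |b m|)^2 ≤ 2 * ((a m)^2 + (b m)^2) := by
          nlinarith [sq_abs (a m), sq_abs (b m), sq_nonneg (|a m| - |b m|)]
        have h := Real.sqrt_le_sqrt hsq
        rwa [Real.sqrt_sq (by positivity), Real.sqrt_mul (by norm_num)] at h
      calc |a m * phiN N m j + b m * psiN N m j|
          ≤ |a m| * |phiN N m j| + |b m| * |psiN N m j| := by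
            refine (abs_add_le _ _).trans ?_
            rw [abs_mul, abs_mul]
        _ ≤ |a m| * Real.sqrt 2 + |b m| * Real.sqrt 2 := by
            have := abs_nonneg (a m); have := abs_nonneg (b m)
            have := mul_le_mul_of_nonneg_left hφ (abs_nonneg (a m))
            have := mul_le_mul_of_nonneg_left hψ (abs_nonneg (b m))
            linarith
        _ = (|a m| + |b m|) * Real.sqrt 2 := by ring
        _ ≤ (Real.sqrt 2 * Real.sqrt ((a m)^2 + (b m)^2)) * Real.sqrt 2 :=
            mul_le_mul_of_nonneg_right hab (Real.sqrt_nonneg 2)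
        _ = 2 * Real.sqrt ((a m)^2 + (b m)^2) := by
            rw [show (Real.sqrt 2 * Real.sqrt ((a m)^2 + (b m)^2)) * Real.sqrt 2
                = (Real.sqrt 2 * Real.sqrt 2) * Real.sqrt ((a m)^2 + (b m)^2) from by ring, h2]
    -- Cauchy-Schwarz step
    set f : ℕ → ℝ := fun m => (1 + lamd N m)^(-(β/2)) with hf
    set g : ℕ → ℝ := fun m => (1 + lamd N m)^(β/2) * Real.sqrt ((a m)^2 + (b m)^2) with hgdef
    have hfg : ∀ m, Real.sqrt ((a m)^2 + (b m)^2) = f m * g m := by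
      intro m
      rw [hf, hgdef]
      rw [show (1 + lamd N m)^(-(β/2)) * ((1 + lamd N m)^(β/2) * Real.sqrt ((a m)^2 + (b m)^2))
          = ((1 + lamd N m)^(-(β/2)) * (1 + lamd N m)^(β/2)) * Real.sqrt ((a m)^2 + (b m)^2) from by ring,
        ← Real.rpow_add (hlam_pos m), neg_add_cancel, Real.rpow_zero, one_mul]
    have hf2 : ∀ m, (f m)^2 = (1 + lamd N m)^(-β) := by
      intro m
      rw [hf, ← Real.rpow_natCast ((1 + lamd N m)^(-(β/2))) 2, ← Real.rpow_mul (hlam_pos m).le]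
      norm_num
    have hg2 : ∀ m, (g m)^2 = (1 + lamd N m)^β * ((a m)^2 + (b m)^2) := by
      intro m
      rw [hgdef, mul_pow, Real.sq_sqrt (by positivity),
        ← Real.rpow_natCast ((1 + lamd N m)^(β/2)) 2, ← Real.rpow_mul (hlam_pos m).le]
      norm_num
    have hCS := Finset.sum_mul_sq_le_sq_mul_sq (Finset.range R) f g
    have hsumf : ∑ m ∈ Finset.range R, (f m)^2 ≤ S := by
      rw [Finset.sum_congr rfl fun m _ => hf2 m]
      exact hS N h1
    have hsumg : ∑ m ∈ Finset.range R, (g m)^2 = sobNormSq N β v := by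
      rw [Finset.sum_congr rfl fun m _ => hg2 m]
      rfl
    have hfgnn : 0 ≤ ∑ m ∈ Finset.range R, f m * g m := by
      refine Finset.sum_nonneg fun m _ => mul_nonneg ?_ ?_
      · exact Real.rpow_nonneg (hlam_pos m).le _
      · exact mul_nonneg (Real.rpow_nonneg (hlam_pos m).le _) (Real.sqrt_nonneg _)
    have hfgle : ∑ m ∈ Finset.range R, f m * g m ≤ Real.sqrt S * sobNorm N β v := by
      have h1' : (∑ m ∈ Finset.range R, f m * g m)^2 ≤ S * sobNormSq N β v := by
        refine hCS.trans ?_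
        rw [hsumg]
        exact mul_le_mul_of_nonneg_right hsumf hPβ0
      have h2' := Real.sqrt_le_sqrt h1'
      rwa [Real.sqrt_sq hfgnn, Real.sqrt_mul hSpos.le] at h2'
    calc |v j| ≤ ∑ m ∈ Finset.range R, 2 * Real.sqrt ((a m)^2 + (b m)^2) := step1
      _ = 2 * ∑ m ∈ Finset.range R, f m * g m := by
          rw [Finset.mul_sum]
          exact Finset.sum_congr rfl fun m _ => by rw [hfg m]
      _ ≤ 2 * (Real.sqrt S * sobNorm N β v) := by linarith
      _ = 2 * Real.sqrt S * sobNorm N β v := by ring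
  constructor
  · -- first inequality
    set B := 2 * Real.sqrt S * sobNorm N β v with hB
    have hB0 : 0 ≤ B := by
      have : 0 ≤ sobNorm N β v := Real.sqrt_nonneg _
      positivity
    have key : sobNormSq N 0 (fun j => u j * v j) ≤ B^2 * sobNormSq N 0 u := by
      rw [parseval hN h1 _, hPu]
      rw [show B^2 * ((1/(N:ℝ)) * ∑ j, (u j)^2) = (1/(N:ℝ)) * ∑ j, B^2 * (u j)^2 from by
        rw [Finset.mul_sum]; rw [Finset.mul_sum]; rw [Finset.mul_sum]
        ring_nf]
      refine mul_le_mul_of_nonneg_left (Finset.sum_le_sum fun j _ => ?_) (by positivity)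
      have hv2 : (v j)^2 ≤ B^2 := by
        rw [← sq_abs (v j)]
        exact pow_le_pow_left₀ (abs_nonneg _) (hsup j) 2
      nlinarith [sq_nonneg (u j)]
    have := Real.sqrt_le_sqrt key
    rw [Real.sqrt_mul (by positivity) (sobNormSq N 0 u), Real.sqrt_sq hB0] at this
    calc sobNorm N 0 (fun j => u j * v j) ≤ B * Real.sqrt (sobNormSq N 0 u) := this
      _ = 2 * Real.sqrt S * sobNorm N 0 u * sobNorm N β v := by
          rw [hB]; unfold sobNorm; ring
  · -- second inequality
    have hip : ∀ (g : Fin N → ℝ), (∀ j, (g j)^2 ≤ 2) →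
        (ip N (fun j => u j * v j) g)^2 ≤ 2 * sobNormSq N 0 u * sobNormSq N 0 v := by
      intro g hg
      have hCS := Finset.sum_mul_sq_le_sq_mul_sq Finset.univ u (fun j => v j * g j)
      have hvg : ∑ j, (v j * g j)^2 ≤ ∑ j, 2 * (v j)^2 := by
        refine Finset.sum_le_sum fun j _ => ?_
        have := hg j
        nlinarith [sq_nonneg (v j)]
      have hmatch : ip N (fun j => u j * v j) g = (1/(N:ℝ)) * ∑ j, u j * (v j * g j) := by
        rw [ip]
        congr 1
        exact Finset.sum_congr rfl fun j _ => by ring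
      rw [hmatch, mul_pow]
      have hsu : 0 ≤ ∑ j, (u j)^2 := Finset.sum_nonneg fun j _ => sq_nonneg _
      have hsv : 0 ≤ ∑ j, (v j)^2 := Finset.sum_nonneg fun j _ => sq_nonneg _
      have hstep : (∑ j, u j * (v j * g j))^2 ≤ (∑ j, (u j)^2) * (2 * ∑ j, (v j)^2) := by
        refine hCS.trans ?_
        refine mul_le_mul_of_nonneg_left ?_ hsu
        rw [Finset.mul_sum]
        refine hvg.trans (le_of_eq ?_)
        exact Finset.sum_congr rfl fun j _ => rfl
      calc (1/(N:ℝ))^2 * (∑ j, u j * (v j * g j))^2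
          ≤ (1/(N:ℝ))^2 * ((∑ j, (u j)^2) * (2 * ∑ j, (v j)^2)) :=
            mul_le_mul_of_nonneg_left hstep (by positivity)
        _ = 2 * ((1/(N:ℝ)) * ∑ j, (u j)^2) * ((1/(N:ℝ)) * ∑ j, (v j)^2) := by ring
        _ = 2 * sobNormSq N 0 u * sobNormSq N 0 v := by rw [hPu, hPv]
    have key : sobNormSq N (-β) (fun j => u j * v j) ≤ S * (4 * sobNormSq N 0 u * sobNormSq N 0 v) := by
      unfold sobNormSq
      calc ∑ m ∈ Finset.range R, (1 + lamd N m)^(-β) *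
            ((ip N (fun j => u j * v j) (phiN N m))^2 + (ip N (fun j => u j * v j) (psiN N m))^2)
          ≤ ∑ m ∈ Finset.range R, (1 + lamd N m)^(-β) * (4 * sobNormSq N 0 u * sobNormSq N 0 v) := by
            refine Finset.sum_le_sum fun m _ => ?_
            refine mul_le_mul_of_nonneg_left ?_ (Real.rpow_nonneg (hlam_pos m).le _)
            have h1' := hip (phiN N m) (fun j => phiN_sq_le N m j)
            have h2' := hip (psiN N m) (fun j => psiN_sq_le N m j)
            linarith
        _ = (∑ m ∈ Finset.range R, (1 + lamd N m)^(-β)) * (4 * sobNormSq N 0 u * sobNormSq N 0 v) := by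
            rw [Finset.sum_mul]
        _ ≤ S * (4 * sobNormSq N 0 u * sobNormSq N 0 v) := by
            refine mul_le_mul_of_nonneg_right (hS N h1) (by positivity)
    have h4 : S * (4 * sobNormSq N 0 u * sobNormSq N 0 v)
        = (2 * Real.sqrt S)^2 * sobNormSq N 0 u * sobNormSq N 0 v := by
      rw [mul_pow, Real.sq_sqrt hSpos.le]
      ring
    have := Real.sqrt_le_sqrt (key.trans_eq h4)
    unfold sobNorm
    refine this.trans (le_of_eq ?_)
    rw [Real.sqrt_mul (by positivity), Real.sqrt_mul (by positivity), Real.sqrt_sq (by positivity)]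
end
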